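/- arXiv:cs/9809012 — 6 statements merged into one kernel-verified Lean document; each statement's English description precedes it below -/
import Mathlib

section
/- Let G be a multigraph on n ≥ 2 vertices with minimum cut value c ≥ 1, and suppose each edge fails independently with probability p ∈ [0,1], where p^c = n^{-(2+δ)} for some real δ > 0. Then for every integer r ≥ 2, the probability that some r-way cut of G fails (all edges of its edge set fail) is at most n^{-δr/4}(1 + 2/δ). -/
/-!
By the union bound it suffices to show `∑ p ^ v(P) ≤ n ^ (-δr/4) (1 + 2/δ)`, the sum running over
the partitions `P` of `V` into `r` parts, `v(P)` the value of the `r`-way cut of `P`.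

The core is Karger's counting bound: at most `n ^ (2s/c)` such partitions have `v(P) ≤ s`.
Derandomising the contraction algorithm, count the partitions of value `≤ s` that are coarser
than a partition `π` into `k` parts. The cut of `π` has `m ≥ kc/2` edges and each counted
partition is crossed by at most `s` of them, so it is coarser than `π` with the two ends of
at least `m - s` of them merged. Unrolling down to `b = ⌈2s/c⌉` parts, where at most `b !`
partitions are left, bounds the count by `b ! ∏_{k > b} k / (k - 2s/c)`; Hölder interpolation
between the exact values of this product at `2s/c = b` and `2s/c = b - 1` gives `n ^ (2s/c)`.

Hence the `j`-th cheapest partition has `u = n ^ (2v/c) ≥ j`, while `p ^ v = u ^ (-(1 + δ/2))`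
and `v ≥ rc/2`. Its term is therefore at most `min (n ^ (-(2+δ)r/2)) (j ^ (-(1 + δ/2)))`: the
first `n ^ r` terms contribute at most `n ^ (-δr/2)` and the tail at most `(2/δ) n ^ (-δr/2)`.
-/

open scoped Classical

/-- A multigraph on vertex type `V` is given by an edge-index type `E` together with a map
`ends : E → Sym2 V` assigning to each edge its (unordered) pair of endpoints; the hypothesis
`∀ e, ¬ (ends e).IsDiag` says that the two endpoints of every edge are distinct.
`survGraph ends F` is the simple graph on `V` whose adjacencies are given by the edges of the
multigraph that survive when the edges in `F` fail. -/
def survGraph {V E : Type} (ends : E → Sym2 V) (F : Finset E) : SimpleGraph V :=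
  SimpleGraph.fromRel (fun x y => ∃ e, e ∉ F ∧ ends e = s(x, y))

/-- The number of connected components of the graph surviving after the edges in `F` fail. -/
noncomputable def numComponents {V E : Type} (ends : E → Sym2 V) (F : Finset E) : ℕ :=
  Nat.card (survGraph ends F).ConnectedComponent

/-- Edge `e` crosses the 2-way cut determined by the vertex set `A` (one endpoint in `A`,
one endpoint outside `A`). -/
def crosses {V E : Type} (ends : E → Sym2 V) (A : Finset V) (e : E) : Prop :=
  (∃ x ∈ ends e, x ∈ A) ∧ (∃ x ∈ ends e, x ∉ A)

/-- The edge set of the 2-way cut determined by the vertex set `A`. -/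
noncomputable def cutEdges {V E : Type} [Fintype E] (ends : E → Sym2 V) (A : Finset V) :
    Finset E :=
  Finset.univ.filter (crosses ends A)

/-- The value of the 2-way cut determined by the vertex set `A`. -/
noncomputable def cutValue {V E : Type} [Fintype E] (ends : E → Sym2 V) (A : Finset V) : ℕ :=
  (cutEdges ends A).card

/-- When each edge fails independently with probability `p`, this is the probability that the
(random) set of failed edges is a member of `S`. -/
noncomputable def failurePr {E : Type} [Fintype E] (p : ℝ) (S : Finset (Finset E)) : ℝ :=
  ∑ F ∈ S, p ^ F.card * (1 - p) ^ (Fintype.card E - F.card)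

/-- `P` is a partition of the vertex set into `r` (pairwise disjoint) nonempty parts. -/
def IsPartitionInto {V : Type} (P : Finset (Finset V)) (r : ℕ) : Prop :=
  P.card = r ∧ (∀ A ∈ P, A.Nonempty) ∧
    (∀ A ∈ P, ∀ B ∈ P, A ≠ B → Disjoint A B) ∧ (∀ x : V, ∃ A ∈ P, x ∈ A)

/-- Edge `e` crosses the multiway cut determined by the partition `P`
(its endpoints lie in different parts). -/
def rCrosses {V E : Type} (ends : E → Sym2 V) (P : Finset (Finset V)) (e : E) : Prop :=
  ¬ ∃ A ∈ P, ∀ x ∈ ends e, x ∈ A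

/-- The edge set of the multiway cut determined by the partition `P`. -/
noncomputable def rCutEdges {V E : Type} [Fintype E] (ends : E → Sym2 V)
    (P : Finset (Finset V)) : Finset E :=
  Finset.univ.filter (rCrosses ends P)

/-- The value of the multiway cut determined by the partition `P`. -/
noncomputable def rCutValue {V E : Type} [Fintype E] (ends : E → Sym2 V)
    (P : Finset (Finset V)) : ℕ :=
  (rCutEdges ends P).card


open Finset
open scoped Nat

noncomputable def partOf {V : Type} (P : Finset (Finset V)) (x : V) : Finset V :=
  if h : ∃ A ∈ P, x ∈ A then h.choose else ∅

noncomputable def mergeParts {V : Type} (P : Finset (Finset V)) (A B : Finset V) :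
    Finset (Finset V) :=
  insert (A ∪ B) ((P.erase A).erase B)

noncomputable def discretePartition (V : Type) [Fintype V] : Finset (Finset V) :=
  univ.image fun x => {x}

namespace IsPartitionInto

variable {V : Type} {P Q : Finset (Finset V)} {k l : ℕ} {A B : Finset V} {x y : V}

theorem eq_of_mem_of_mem (hP : IsPartitionInto P k) (hA : A ∈ P) (hB : B ∈ P)
    (hxA : x ∈ A) (hxB : x ∈ B) : A = B := by
  by_contra hAB
  exact disjoint_left.1 (hP.2.2.1 A hA B hB hAB) hxA hxB

theorem partOf_mem (hP : IsPartitionInto P k) (x : V) : partOf P x ∈ P := by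
  rw [partOf, dif_pos (hP.2.2.2 x)]
  exact (hP.2.2.2 x).choose_spec.1

theorem mem_partOf (hP : IsPartitionInto P k) (x : V) : x ∈ partOf P x := by
  rw [partOf, dif_pos (hP.2.2.2 x)]
  exact (hP.2.2.2 x).choose_spec.2

theorem partOf_eq (hP : IsPartitionInto P k) (hA : A ∈ P) (hx : x ∈ A) : partOf P x = A :=
  hP.eq_of_mem_of_mem (hP.partOf_mem x) hA (hP.mem_partOf x) hx

theorem mem_partOf_iff (hP : IsPartitionInto P k) : y ∈ partOf P x ↔ partOf P y = partOf P x :=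
  ⟨fun hy => hP.partOf_eq (hP.partOf_mem x) hy, fun h => h ▸ hP.mem_partOf y⟩

theorem partOf_eq_partOf_iff (hP : IsPartitionInto P k) :
    partOf P x = partOf P y ↔ ∃ A ∈ P, x ∈ A ∧ y ∈ A :=
  ⟨fun h => ⟨partOf P x, hP.partOf_mem x, hP.mem_partOf x, h ▸ hP.mem_partOf y⟩,
    fun ⟨_, hA, hxA, hyA⟩ => (hP.partOf_eq hA hxA).trans (hP.partOf_eq hA hyA).symm⟩

theorem partOf_eq_iff (hP : IsPartitionInto P k) (hA : A ∈ P) :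
    partOf P x = A ↔ x ∈ A :=
  ⟨fun h => h ▸ hP.mem_partOf x, hP.partOf_eq hA⟩

theorem ext_of_partOf (hP : IsPartitionInto P k) (hQ : IsPartitionInto Q l)
    (h : ∀ x y, partOf P x = partOf P y ↔ partOf Q x = partOf Q y) : P = Q := by
  have key : ∀ x, partOf P x = partOf Q x := fun x => by
    ext y
    rw [hP.mem_partOf_iff, hQ.mem_partOf_iff, h]
  ext A
  constructor
  · intro hA
    obtain ⟨x, hx⟩ := hP.2.1 A hA
    rw [← hP.partOf_eq hA hx, key]
    exact hQ.partOf_mem x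
  · intro hA
    obtain ⟨x, hx⟩ := hQ.2.1 A hA
    rw [← hQ.partOf_eq hA hx, ← key]
    exact hP.partOf_mem x

theorem compl_nonempty [Fintype V] [DecidableEq V] (hP : IsPartitionInto P k) (hk : 2 ≤ k)
    (hA : A ∈ P) : Aᶜ.Nonempty := by
  obtain ⟨B, hB, hBA⟩ := exists_mem_ne (by rw [hP.1]; omega : 1 < #P) A
  obtain ⟨z, hz⟩ := hP.2.1 B hB
  exact ⟨z, mem_compl.2 fun hzA => disjoint_left.1 (hP.2.2.1 B hB A hA hBA) hz hzA⟩

end IsPartitionInto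

theorem isPartitionInto_mergeParts {V : Type} {P : Finset (Finset V)} {k : ℕ} {A B : Finset V}
    (hP : IsPartitionInto P k) (hA : A ∈ P) (hB : B ∈ P) (hAB : A ≠ B) :
    IsPartitionInto (mergeParts P A B) (k - 1) := by
  have hBA : B ∈ P.erase A := mem_erase.2 ⟨hAB.symm, hB⟩
  have mem_rest : ∀ {C}, C ∈ (P.erase A).erase B → C ∈ P ∧ C ≠ A ∧ C ≠ B := fun hC =>
    ⟨mem_of_mem_erase (mem_of_mem_erase hC), ne_of_mem_erase (mem_of_mem_erase hC),
      ne_of_mem_erase hC⟩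
  have hunion : A ∪ B ∉ (P.erase A).erase B := fun h => by
    obtain ⟨hC, hCA, -⟩ := mem_rest h
    obtain ⟨x, hx⟩ := hP.2.1 A hA
    exact hCA (hP.eq_of_mem_of_mem hC hA (mem_union_left _ hx) hx)
  refine ⟨?_, ?_, ?_, ?_⟩
  · have : 1 < #P := one_lt_card.2 ⟨A, hA, B, hB, hAB⟩
    rw [mergeParts, card_insert_of_notMem hunion, card_erase_of_mem hBA,
      card_erase_of_mem hA, ← hP.1]
    omega
  · intro C hC
    rcases mem_insert.1 hC with rfl | hC
    · exact (hP.2.1 A hA).mono subset_union_left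
    · exact hP.2.1 C (mem_rest hC).1
  · have disj_union : ∀ {C}, C ∈ (P.erase A).erase B → Disjoint (A ∪ B) C := fun {C} hC => by
      obtain ⟨hC, hCA, hCB⟩ := mem_rest hC
      exact disjoint_union_left.2 ⟨hP.2.2.1 A hA C hC hCA.symm, hP.2.2.1 B hB C hC hCB.symm⟩
    intro C hC D hD hCD
    rcases mem_insert.1 hC with rfl | hC <;> rcases mem_insert.1 hD with rfl | hD
    · exact absurd rfl hCD
    · exact disj_union hD
    · exact (disj_union hC).symm
    · exact hP.2.2.1 C (mem_rest hC).1 D (mem_rest hD).1 hCD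
  · intro x
    obtain ⟨C, hC, hxC⟩ := hP.2.2.2 x
    by_cases hCA : C = A
    · exact ⟨A ∪ B, mem_insert_self _ _, mem_union_left _ (hCA ▸ hxC)⟩
    by_cases hCB : C = B
    · exact ⟨A ∪ B, mem_insert_self _ _, mem_union_right _ (hCB ▸ hxC)⟩
    exact ⟨C, mem_insert_of_mem (mem_erase.2 ⟨hCB, mem_erase.2 ⟨hCA, hC⟩⟩), hxC⟩

theorem isPartitionInto_discretePartition (V : Type) [Fintype V] :
    IsPartitionInto (discretePartition V) (Fintype.card V) := by
  refine ⟨?_, ?_, ?_, fun x => ⟨{x}, mem_image_of_mem _ (mem_univ x), mem_singleton_self x⟩⟩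
  · rw [discretePartition, card_image_of_injective _ singleton_injective, card_univ]
  · simp only [discretePartition, mem_image, mem_univ, true_and]
    rintro A ⟨x, rfl⟩
    exact singleton_nonempty x
  · simp only [discretePartition, mem_image, mem_univ, true_and]
    rintro A ⟨x, rfl⟩ B ⟨y, rfl⟩ hxy
    exact disjoint_singleton.2 fun h => hxy (h ▸ rfl)

theorem Sym2.mk_out_fst_out_snd {V : Type} (z : Sym2 V) : s(z.out.1, z.out.2) = z :=
  Quot.out_eq z

section Crossing

variable {V E : Type} {ends : E → Sym2 V} {P : Finset (Finset V)} {k : ℕ} {A : Finset V} {e : E}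
  {x y : V}

theorem crosses_iff (he : ends e = s(x, y)) : crosses ends A e ↔ (x ∈ A ↔ y ∉ A) := by
  simp only [crosses, he, Sym2.mem_iff, exists_eq_or_imp, exists_eq_left]
  tauto

theorem IsPartitionInto.rCrosses_iff (hP : IsPartitionInto P k) (he : ends e = s(x, y)) :
    rCrosses ends P e ↔ partOf P x ≠ partOf P y := by
  simp only [rCrosses, he, Sym2.mem_iff, forall_eq_or_imp, forall_eq]
  rw [ne_eq, hP.partOf_eq_partOf_iff]

theorem IsPartitionInto.card_filter_crosses (hP : IsPartitionInto P k) (e : E) :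
    #(P.filter (crosses ends · e)) = if rCrosses ends P e then 2 else 0 := by
  set x := (ends e).out.1
  set y := (ends e).out.2
  have he : ends e = s(x, y) := (Sym2.mk_out_fst_out_snd _).symm
  have key : ∀ A ∈ P, crosses ends A e ↔ (partOf P x = A ↔ ¬ partOf P y = A) := fun A hA => by
    rw [crosses_iff he, hP.partOf_eq_iff (x := x) hA, hP.partOf_eq_iff (x := y) hA]
  rw [hP.rCrosses_iff he]
  split_ifs with hxy
  · convert card_pair hxy using 2
    ext A
    simp only [mem_filter, mem_insert, mem_singleton]
    constructor
    · rintro ⟨hA, hcr⟩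
      rw [key A hA] at hcr
      tauto
    · rintro (rfl | rfl)
      · exact ⟨hP.partOf_mem x, (key _ (hP.partOf_mem x)).2 (iff_of_true rfl (Ne.symm hxy))⟩
      · exact ⟨hP.partOf_mem y, (key _ (hP.partOf_mem y)).2 (iff_of_false hxy (not_not.2 rfl))⟩
  · rw [card_eq_zero, filter_eq_empty_iff]
    intro A hA hcr
    rw [key A hA, not_not.1 hxy] at hcr
    tauto

variable [Fintype E]

theorem IsPartitionInto.sum_cutValue (hP : IsPartitionInto P k) :
    ∑ A ∈ P, cutValue ends A = 2 * rCutValue ends P := by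
  have := sum_card_bipartiteAbove_eq_sum_card_bipartiteBelow (s := P) (t := univ)
    (r := fun A e => crosses ends A e)
  simp only [bipartiteAbove, bipartiteBelow, hP.card_filter_crosses] at this
  simp only [cutValue, cutEdges, this, ← sum_filter, sum_const, smul_eq_mul, rCutValue, rCutEdges,
    mul_comm]

theorem IsPartitionInto.mul_le_two_mul_rCutValue [Fintype V] [DecidableEq V]
    (hP : IsPartitionInto P k) (hk : 2 ≤ k) {c : ℕ}
    (hmin : ∀ A : Finset V, A.Nonempty → Aᶜ.Nonempty → c ≤ cutValue ends A) :
    k * c ≤ 2 * rCutValue ends P := by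
  rw [← hP.sum_cutValue, ← hP.1, ← smul_eq_mul]
  exact card_nsmul_le_sum P _ c fun A hA => hmin A (hP.2.1 A hA) (hP.compl_nonempty hk hA)

end Crossing

def Refines {V : Type} (π P : Finset (Finset V)) : Prop :=
  ∀ A ∈ π, ∃ B ∈ P, A ⊆ B

noncomputable def mergeAt {V E : Type} (ends : E → Sym2 V) (π : Finset (Finset V)) (e : E) :
    Finset (Finset V) :=
  mergeParts π (partOf π (ends e).out.1) (partOf π (ends e).out.2)

section Refines

variable {V E : Type} {ends : E → Sym2 V} {π P : Finset (Finset V)} {k r : ℕ}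
  {A B C : Finset V} {e : E} {x : V}

theorem IsPartitionInto.subset_of_refines (hP : IsPartitionInto P r) (h : Refines π P)
    (hA : A ∈ π) (hC : C ∈ P) (hxA : x ∈ A) (hxC : x ∈ C) : A ⊆ C := by
  obtain ⟨D, hD, hAD⟩ := h A hA
  exact hP.eq_of_mem_of_mem hD hC (hAD hxA) hxC ▸ hAD

theorem IsPartitionInto.filter_superset_eq_singleton_partOf (hP : IsPartitionInto P r)
    (h : Refines π P) (hA : A ∈ π) (hx : x ∈ A) : P.filter (A ⊆ ·) = {partOf P x} := by
  ext C
  simp only [mem_filter, mem_singleton]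
  constructor
  · rintro ⟨hC, hAC⟩
    exact (hP.partOf_eq hC (hAC hx)).symm
  · rintro rfl
    exact ⟨hP.partOf_mem x, hP.subset_of_refines h hA (hP.partOf_mem x) hx (hP.mem_partOf x)⟩

theorem refines_mergeParts_iff :
    Refines (mergeParts π A B) P ↔ Refines π P ∧ ∃ C ∈ P, A ∪ B ⊆ C := by
  constructor
  · intro h
    obtain ⟨C, hC, hABC⟩ := h (A ∪ B) (mem_insert_self _ _)
    refine ⟨fun D hD => ?_, C, hC, hABC⟩
    by_cases hDA : D = A
    · exact ⟨C, hC, hDA ▸ subset_union_left.trans hABC⟩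
    by_cases hDB : D = B
    · exact ⟨C, hC, hDB ▸ subset_union_right.trans hABC⟩
    exact h D (mem_insert_of_mem (mem_erase.2 ⟨hDB, mem_erase.2 ⟨hDA, hD⟩⟩))
  · rintro ⟨h, C, hC, hABC⟩ D hD
    rcases mem_insert.1 hD with rfl | hD
    · exact ⟨C, hC, hABC⟩
    · exact h D (mem_of_mem_erase (mem_of_mem_erase hD))

theorem IsPartitionInto.refines_mergeAt_iff (hπ : IsPartitionInto π k)
    (hP : IsPartitionInto P r) :
    Refines (mergeAt ends π e) P ↔ Refines π P ∧ ¬ rCrosses ends P e := by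
  set x := (ends e).out.1
  set y := (ends e).out.2
  have he : ends e = s(x, y) := (Sym2.mk_out_fst_out_snd _).symm
  rw [mergeAt, refines_mergeParts_iff, hP.rCrosses_iff he, not_not, hP.partOf_eq_partOf_iff]
  refine and_congr_right fun h => ⟨fun ⟨C, hC, hxyC⟩ => ?_, fun ⟨C, hC, hxC, hyC⟩ => ?_⟩
  · exact ⟨C, hC, hxyC (mem_union_left _ (hπ.mem_partOf x)),
      hxyC (mem_union_right _ (hπ.mem_partOf y))⟩
  · exact ⟨C, hC, union_subset
      (hP.subset_of_refines h (hπ.partOf_mem x) hC (hπ.mem_partOf x) hxC)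
      (hP.subset_of_refines h (hπ.partOf_mem y) hC (hπ.mem_partOf y) hyC)⟩

theorem isPartitionInto_mergeAt (hπ : IsPartitionInto π k) (he : rCrosses ends π e) :
    IsPartitionInto (mergeAt ends π e) (k - 1) :=
  isPartitionInto_mergeParts hπ (hπ.partOf_mem _) (hπ.partOf_mem _)
    ((hπ.rCrosses_iff (Sym2.mk_out_fst_out_snd _).symm).1 he)

theorem IsPartitionInto.refines_discretePartition [Fintype V]
    (hP : IsPartitionInto P k) : Refines (discretePartition V) P := by
  simp only [Refines, discretePartition, mem_image, mem_univ, true_and]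
  rintro A ⟨x, rfl⟩
  exact ⟨partOf P x, hP.partOf_mem x, singleton_subset_iff.2 (hP.mem_partOf x)⟩

end Refines

theorem card_le_factorial_of_injOn_ker {α ι β : Type*} [Fintype ι] (S : Finset α)
    (H : α → ι → β) (hH : Set.InjOn (fun a i j => H a i = H a j) S) :
    #S ≤ (Fintype.card ι)! := by
  classical
  set n := Fintype.card ι
  let e := Fintype.equivFin ι
  -- `m a i`, the least index in the class of `i` under the kernel of `H a`, is at most `i`,
  -- and there are `n !` maps `f` with `f i ≤ i`
  let m : α → Fin n → Fin n := fun a i =>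
    (univ.filter fun j => H a (e.symm j) = H a (e.symm i)).min' ⟨i, by simp⟩
  have m_le (a : α) (i : Fin n) : m a i ≤ i := min'_le _ _ (by simp)
  have m_spec (a : α) (i : Fin n) : H a (e.symm (m a i)) = H a (e.symm i) :=
    (mem_filter.1 (min'_mem (univ.filter fun j => H a (e.symm j) = H a (e.symm i)) _)).2
  have m_eq_iff (a : α) (i j : Fin n) : m a i = m a j ↔ H a (e.symm i) = H a (e.symm j) := by
    refine ⟨fun h => ?_, fun h => ?_⟩
    · rw [← m_spec a i, h, m_spec]
    · simp only [m, h]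
  let f : α → (i : Fin n) → Fin (i + 1) := fun a i => ⟨m a i, Nat.lt_succ_of_le (m_le a i)⟩
  have f_inj : Set.InjOn f S := by
    intro a ha b hb hab
    refine hH ha hb (funext₂ fun i j => propext ?_)
    have hm : m a = m b := funext fun i => Fin.ext (by simpa [f] using congrFun hab i)
    change H a i = H a j ↔ H b i = H b j
    rw [← e.symm_apply_apply i, ← e.symm_apply_apply j, ← m_eq_iff a, ← m_eq_iff b, hm]
  calc #S ≤ #(univ : Finset ((i : Fin n) → Fin (i + 1))) :=
        card_le_card_of_injOn f (fun _ _ => mem_coe.2 (mem_univ _)) f_inj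
    _ = n ! := by
        rw [card_univ, Fintype.card_pi]
        simp only [Fintype.card_fin]
        rw [Fin.prod_univ_eq_prod_range (· + 1), prod_range_add_one_eq_factorial]

noncomputable def coarserCuts {V E : Type} [Fintype V] [Fintype E] (ends : E → Sym2 V)
    (r s : ℕ) (π : Finset (Finset V)) : Finset (Finset (Finset V)) :=
  univ.filter fun P => IsPartitionInto P r ∧ rCutValue ends P ≤ s ∧ Refines π P

section CoarserCuts

variable {V E : Type} [Fintype V] [Fintype E] {ends : E → Sym2 V} {π : Finset (Finset V)}
  {k r s : ℕ}

theorem IsPartitionInto.card_coarserCuts_le_factorial (hπ : IsPartitionInto π k) :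
    #(coarserCuts ends r s π) ≤ k ! := by
  have hcard : Fintype.card π = k := by rw [Fintype.card_coe, hπ.1]
  rw [← hcard]
  refine card_le_factorial_of_injOn_ker _ (fun P (A : π) => P.filter (A.1 ⊆ ·)) ?_
  intro P hP Q hQ hPQ
  simp only [coarserCuts, coe_filter, mem_univ, true_and, Set.mem_ofPred_eq] at hP hQ
  -- a partition coarser than `π` is determined by which parts of `π` it puts together
  have key : ∀ {R : Finset (Finset V)}, IsPartitionInto R r → Refines π R → ∀ x y,
      partOf R x = partOf R y ↔
        R.filter (partOf π x ⊆ ·) = R.filter (partOf π y ⊆ ·) := fun hR href x y => by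
    rw [hR.filter_superset_eq_singleton_partOf href (hπ.partOf_mem x) (hπ.mem_partOf x),
      hR.filter_superset_eq_singleton_partOf href (hπ.partOf_mem y) (hπ.mem_partOf y),
      singleton_inj]
  refine hP.1.ext_of_partOf hQ.1 fun x y => ?_
  rw [key hP.1 hP.2.2, key hQ.1 hQ.2.2]
  exact iff_of_eq (congrFun₂ hPQ ⟨_, hπ.partOf_mem x⟩ ⟨_, hπ.partOf_mem y⟩)

theorem IsPartitionInto.card_coarserCuts_mul_le (hπ : IsPartitionInto π k) :
    #(coarserCuts ends r s π) * (rCutValue ends π - s) ≤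
      ∑ e ∈ rCutEdges ends π, #(coarserCuts ends r s (mergeAt ends π e)) := by
  -- double counting of the pairs `(P, e)`, `e` in the cut of `π` and not crossing `P`
  set S := coarserCuts ends r s π
  set X := rCutEdges ends π
  let R : Finset (Finset V) → E → Prop := fun P e => ¬ rCrosses ends P e
  calc #S * (rCutValue ends π - s) ≤ ∑ P ∈ S, #(X.bipartiteAbove R P) := by
        rw [← smul_eq_mul]
        refine card_nsmul_le_sum _ _ _ fun P hP => ?_
        have hcross : #(X.filter (rCrosses ends P)) ≤ s :=
          (card_le_card fun e he => by simpa [rCutEdges] using (mem_filter.1 he).2).trans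
            (mem_filter.1 hP).2.2.1
        have := card_filter_add_card_filter_not (s := X) (rCrosses ends P)
        change #X - s ≤ #(X.filter fun e => ¬ rCrosses ends P e)
        omega
    _ = ∑ e ∈ X, #(S.bipartiteBelow R e) := sum_card_bipartiteAbove_eq_sum_card_bipartiteBelow _
    _ ≤ ∑ e ∈ X, #(coarserCuts ends r s (mergeAt ends π e)) := by
        refine sum_le_sum fun e _ => card_le_card fun P hP => ?_
        simp only [bipartiteBelow, S, coarserCuts, R, mem_filter, mem_univ, true_and] at hP ⊢
        obtain ⟨⟨hP, hs, href⟩, hcr⟩ := hP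
        exact ⟨hP, hs, (hπ.refines_mergeAt_iff hP).2 ⟨href, hcr⟩⟩

end CoarserCuts

theorem descFactorial_mul_prod_div {b k d : ℕ} (h : k + d = b) (j : ℕ) :
    (b.descFactorial k : ℝ) * ∏ i ∈ range j, (b + i + 1 : ℝ) / (d + i + 1) =
      (b + j).descFactorial k := by
  induction j with
  | zero => simp
  | succ j ih =>
    have step := Nat.succ_descFactorial (b + j) k
    rw [show b + j + 1 - k = d + j + 1 by omega] at step
    have hstep : ((b + j).descFactorial k : ℝ) * (b + j + 1) =
        (b + j + 1).descFactorial k * (d + j + 1) := by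
      exact_mod_cast (mul_comm _ _).trans (step.symm.trans (mul_comm _ _))
    rw [prod_range_succ, ← mul_assoc, ih, mul_div_assoc', div_eq_iff (by positivity), hstep,
      add_assoc]

theorem div_add_one_sub_le_rpow_mul_rpow {K x θ : ℝ} (hK : 0 ≤ K) (hx : 0 < x) (hθ0 : 0 ≤ θ)
    (hθ1 : θ ≤ 1) : K / (x + 1 - θ) ≤ (K / x) ^ θ * (K / (x + 1)) ^ (1 - θ) := by
  have hgm : x ^ θ * (x + 1) ^ (1 - θ) ≤ x + 1 - θ := by
    have := Real.geom_mean_le_arith_mean2_weighted (w₁ := θ) (w₂ := 1 - θ) (p₁ := x) (p₂ := x + 1)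
      hθ0 (by linarith) hx.le (by linarith) (by ring)
    linarith
  have hpos : 0 < x ^ θ * (x + 1) ^ (1 - θ) := by positivity
  calc K / (x + 1 - θ) ≤ K / (x ^ θ * (x + 1) ^ (1 - θ)) :=
        div_le_div_of_nonneg_left hK hpos hgm
    _ = (K / x) ^ θ * (K / (x + 1)) ^ (1 - θ) := by
        rw [Real.div_rpow hK hx.le, Real.div_rpow hK (by linarith), div_mul_div_comm,
          ← Real.rpow_add' hK (by norm_num), add_sub_cancel, Real.rpow_one]

theorem prod_div_le_rpow_mul_rpow {K : ℕ → ℝ} (hK : ∀ i, 0 ≤ K i) {θ : ℝ} (hθ0 : 0 ≤ θ)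
    (hθ1 : θ ≤ 1) (j : ℕ) :
    ∏ i ∈ range j, K i / (i + 1 + 1 - θ) ≤
      (∏ i ∈ range j, K i / (i + 1)) ^ θ * (∏ i ∈ range j, K i / (i + 1 + 1)) ^ (1 - θ) := by
  rw [← Real.finsetProd_rpow _ _ (fun i _ => div_nonneg (hK i) (by positivity)),
    ← Real.finsetProd_rpow _ _ (fun i _ => div_nonneg (hK i) (by positivity)), ← prod_mul_distrib]
  exact prod_le_prod
    (fun i _ => div_nonneg (hK i) (by linarith [(Nat.cast_nonneg i : (0 : ℝ) ≤ i)]))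
    fun i _ => div_add_one_sub_le_rpow_mul_rpow (hK i) (by positivity) hθ0 hθ1

/-- Hölder interpolation between the exact values `n.descFactorial b` at `β = b` and
`n.descFactorial (b - 1)` at `β = b - 1` of the left-hand side, where `n = b + j`. -/
theorem factorial_mul_prod_le_rpow {b : ℕ} {β : ℝ} (hb : 1 ≤ b) (hβ1 : (b : ℝ) - 1 < β)
    (hβ2 : β ≤ b) (j : ℕ) :
    (b ! : ℝ) * ∏ i ∈ range j, (b + i + 1 : ℝ) / (b + i + 1 - β) ≤ ((b + j : ℕ) : ℝ) ^ β := by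
  set θ := β - (b - 1)
  set n : ℝ := ((b + j : ℕ) : ℝ) with hn_eq
  set X := ∏ i ∈ range j, (b + i + 1 : ℝ) / (i + 1)
  set Y := ∏ i ∈ range j, (b + i + 1 : ℝ) / (i + 1 + 1)
  have hn : 0 < n := Nat.cast_pos.2 (by omega)
  have hfac : (0 : ℝ) < b ! := by positivity
  have hX : (b ! : ℝ) * X ≤ n ^ (b : ℝ) := by
    have := descFactorial_mul_prod_div (d := 0) (add_zero b) j
    simp only [Nat.descFactorial_self, Nat.cast_zero, zero_add] at this
    rw [this, Real.rpow_natCast, hn_eq]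
    exact_mod_cast Nat.descFactorial_le_pow (b + j) b
  have hY : (b ! : ℝ) * Y ≤ n ^ ((b : ℝ) - 1) := by
    have := descFactorial_mul_prod_div (d := 1) (Nat.sub_add_cancel hb) j
    rw [show b.descFactorial (b - 1) = Nat.factorial b by
      simpa [Nat.sub_sub_self hb] using Nat.factorial_mul_descFactorial (Nat.sub_le b 1)] at this
    simp only [Nat.cast_one, add_comm (1 : ℝ) _] at this
    rw [this, show (b : ℝ) - 1 = ((b - 1 : ℕ) : ℝ) by rw [Nat.cast_sub hb, Nat.cast_one],
      Real.rpow_natCast, hn_eq]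
    exact_mod_cast Nat.descFactorial_le_pow (b + j) (b - 1)
  have hprod : ∏ i ∈ range j, (b + i + 1 : ℝ) / (b + i + 1 - β) ≤ X ^ θ * Y ^ (1 - θ) := by
    rw [prod_congr rfl fun i _ => by rw [show (b + i + 1 : ℝ) - β = i + 1 + 1 - θ by ring]]
    exact prod_div_le_rpow_mul_rpow (fun i => by positivity) (by linarith) (by linarith) j
  have hsplit : (b ! : ℝ) ^ θ * (b ! : ℝ) ^ (1 - θ) = b ! := by
    rw [← Real.rpow_add hfac, add_sub_cancel, Real.rpow_one]
  calc (b ! : ℝ) * ∏ i ∈ range j, (b + i + 1 : ℝ) / (b + i + 1 - β)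
      ≤ (b ! : ℝ) * (X ^ θ * Y ^ (1 - θ)) := by gcongr
    _ = ((b ! : ℝ) * X) ^ θ * ((b ! : ℝ) * Y) ^ (1 - θ) := by
        rw [Real.mul_rpow hfac.le (by positivity), Real.mul_rpow hfac.le (by positivity)]
        linear_combination (-(X ^ θ * Y ^ (1 - θ))) * hsplit
    _ ≤ (n ^ (b : ℝ)) ^ θ * (n ^ ((b : ℝ) - 1)) ^ (1 - θ) := by gcongr; linarith
    _ = n ^ β := by
        rw [← Real.rpow_mul hn.le, ← Real.rpow_mul hn.le, ← Real.rpow_add hn]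
        congr 1
        ring

theorem div_sub_le_div_sub {x K β : ℝ} (hβ : 0 ≤ β) (hK : β < K) (hx : K ≤ x) :
    x / (x - β) ≤ K / (K - β) := by
  rw [div_le_div_iff₀ (by linarith) (by linarith)]
  nlinarith

section Counting

variable {V E : Type} [Fintype V] [DecidableEq V] [Fintype E] {ends : E → Sym2 V} {r s c : ℕ}

theorem IsPartitionInto.card_coarserCuts_le_mul (hc : 0 < c)
    (hmin : ∀ A : Finset V, A.Nonempty → Aᶜ.Nonempty → c ≤ cutValue ends A)
    {k : ℕ} {π : Finset (Finset V)} (hπ : IsPartitionInto π k) (hk : 2 ≤ k)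
    (hsk : (2 * s / c : ℝ) < k) {B : ℝ} (hB : 0 ≤ B)
    (hmerge : ∀ e ∈ rCutEdges ends π, (#(coarserCuts ends r s (mergeAt ends π e)) : ℝ) ≤ B) :
    (#(coarserCuts ends r s π) : ℝ) ≤ k / (k - 2 * s / c) * B := by
  set β : ℝ := 2 * s / c
  set m := rCutValue ends π
  have hcR : (0 : ℝ) < c := Nat.cast_pos.2 hc
  have hkm : (k : ℝ) ≤ 2 * m / c := by
    rw [le_div_iff₀ hcR]
    exact_mod_cast hπ.mul_le_two_mul_rCutValue hk hmin
  have hsm : (s : ℝ) < m := by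
    have : β < 2 * m / c := hsk.trans_le hkm
    rw [div_lt_div_iff_of_pos_right hcR] at this
    linarith
  have hrec : (#(coarserCuts ends r s π) : ℝ) * (m - s) ≤ m * B :=
    calc (#(coarserCuts ends r s π) : ℝ) * (m - s)
        = ((#(coarserCuts ends r s π) * (m - s) : ℕ) : ℝ) := by
          push_cast [Nat.cast_sub (Nat.cast_lt.1 hsm).le]; ring
      _ ≤ ∑ e ∈ rCutEdges ends π, (#(coarserCuts ends r s (mergeAt ends π e)) : ℝ) := by
          rw [← Nat.cast_sum]
          exact Nat.cast_le.2 hπ.card_coarserCuts_mul_le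
      _ ≤ m * B := (sum_le_card_nsmul _ _ _ hmerge).trans_eq (by rw [nsmul_eq_mul]; rfl)
  calc (#(coarserCuts ends r s π) : ℝ) ≤ m / (m - s) * B := by
        rw [div_mul_eq_mul_div, le_div_iff₀ (by linarith)]
        exact hrec
    _ = 2 * m / c / (2 * m / c - β) * B := by
        rw [show 2 * (m : ℝ) / c - β = 2 * (m - s) / c by simp only [β]; ring]
        field_simp
    _ ≤ k / (k - β) * B :=
        mul_le_mul_of_nonneg_right (div_sub_le_div_sub (by positivity) hsk hkm) hB

theorem IsPartitionInto.card_coarserCuts_le_prod (hc : 0 < c)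
    (hmin : ∀ A : Finset V, A.Nonempty → Aᶜ.Nonempty → c ≤ cutValue ends A)
    {b : ℕ} (hb : 0 < b) (hsb : (2 * s / c : ℝ) ≤ b) {j : ℕ} {π : Finset (Finset V)}
    (hπ : IsPartitionInto π (b + j)) :
    (#(coarserCuts ends r s π) : ℝ) ≤
      b ! * ∏ i ∈ range j, (b + i + 1 : ℝ) / (b + i + 1 - 2 * s / c) := by
  induction j generalizing π with
  | zero => simpa using (Nat.cast_le (α := ℝ)).2 hπ.card_coarserCuts_le_factorial
  | succ j ih =>
    have hsk : (2 * s / c : ℝ) < b + j + 1 := by linarith [(Nat.cast_nonneg j : (0 : ℝ) ≤ j)]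
    have hB : (0 : ℝ) ≤ b ! * ∏ i ∈ range j, (b + i + 1 : ℝ) / (b + i + 1 - 2 * s / c) :=
      mul_nonneg (by positivity) (prod_nonneg fun i _ =>
        div_nonneg (by positivity) (by linarith [(Nat.cast_nonneg i : (0 : ℝ) ≤ i)]))
    refine (hπ.card_coarserCuts_le_mul hc hmin (by omega) (by push_cast; linarith) hB
      fun e he => ih ?_).trans_eq ?_
    · have h := isPartitionInto_mergeAt hπ (mem_filter.1 he).2
      rwa [show b + (j + 1) - 1 = b + j by omega] at h
    · rw [prod_range_succ]
      push_cast
      ring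

theorem card_filter_rCutValue_le (hV : 0 < Fintype.card V) (hc : 0 < c)
    (hmin : ∀ A : Finset V, A.Nonempty → Aᶜ.Nonempty → c ≤ cutValue ends A) (hs : 0 < s) :
    (#(univ.filter fun P => IsPartitionInto P r ∧ rCutValue ends P ≤ s) : ℝ) ≤
      (Fintype.card V : ℝ) ^ (2 * s / c : ℝ) := by
  set β : ℝ := 2 * s / c
  set n := Fintype.card V
  have hβ : 0 < β := by positivity
  have hcount : univ.filter (fun P => IsPartitionInto P r ∧ rCutValue ends P ≤ s) =
      coarserCuts ends r s (discretePartition V) :=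
    filter_congr fun P _ => ⟨fun h => ⟨h.1, h.2, h.1.refines_discretePartition⟩,
      fun h => ⟨h.1, h.2.1⟩⟩
  rw [hcount]
  set b := ⌈β⌉₊
  have hb : 0 < b := Nat.ceil_pos.2 hβ
  have hβb : β ≤ b := Nat.le_ceil β
  have hbβ : (b : ℝ) - 1 < β := by linarith [Nat.ceil_lt_add_one hβ.le]
  rcases le_or_gt b n with hbn | hnb
  · obtain ⟨j, hj⟩ := Nat.exists_eq_add_of_le hbn
    have hπ : IsPartitionInto (discretePartition V) (b + j) :=
      hj ▸ isPartitionInto_discretePartition V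
    calc (#(coarserCuts ends r s (discretePartition V)) : ℝ)
        ≤ b ! * ∏ i ∈ range j, (b + i + 1 : ℝ) / (b + i + 1 - β) :=
          hπ.card_coarserCuts_le_prod hc hmin hb hβb
      _ ≤ ((b + j : ℕ) : ℝ) ^ β := factorial_mul_prod_le_rpow hb hbβ hβb j
      _ = (n : ℝ) ^ β := by rw [hj]
  · have hnβ : (n : ℝ) ≤ β := by
      have : (n : ℝ) ≤ b - 1 := by
        rw [le_sub_iff_add_le]; exact_mod_cast hnb
      linarith
    calc (#(coarserCuts ends r s (discretePartition V)) : ℝ) ≤ (n ! : ℝ) := by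
          exact_mod_cast (isPartitionInto_discretePartition V).card_coarserCuts_le_factorial
      _ ≤ (n : ℝ) ^ (n : ℝ) := by
          rw [Real.rpow_natCast]; exact_mod_cast Nat.factorial_le_pow n
      _ ≤ (n : ℝ) ^ β := Real.rpow_le_rpow_of_exponent_le (by exact_mod_cast hV) hnβ

end Counting

section FailureProbability

variable {E : Type} [Fintype E] {p : ℝ}

theorem failurePr_mono (hp0 : 0 ≤ p) (hp1 : p ≤ 1) {S T : Finset (Finset E)} (h : S ⊆ T) :
    failurePr p S ≤ failurePr p T :=
  sum_le_sum_of_subset_of_nonneg h fun _ _ _ =>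
    mul_nonneg (pow_nonneg hp0 _) (pow_nonneg (by linarith) _)

theorem failurePr_union_le (hp0 : 0 ≤ p) (hp1 : p ≤ 1) (S T : Finset (Finset E)) :
    failurePr p (S ∪ T) ≤ failurePr p S + failurePr p T := by
  have hinter : 0 ≤ failurePr p (S ∩ T) := failurePr_mono hp0 hp1 (empty_subset _)
  have := sum_union_inter (s₁ := S) (s₂ := T)
    (f := fun F => p ^ #F * (1 - p) ^ (Fintype.card E - #F))
  simp only [failurePr] at hinter ⊢
  linarith

theorem failurePr_biUnion_le (hp0 : 0 ≤ p) (hp1 : p ≤ 1) {ι : Type*} (T : Finset ι)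
    (S : ι → Finset (Finset E)) :
    failurePr p (T.biUnion S) ≤ ∑ i ∈ T, failurePr p (S i) := by
  classical
  induction T using Finset.induction_on with
  | empty => simp [failurePr]
  | insert i T hi ih =>
    rw [biUnion_insert, sum_insert hi]
    exact (failurePr_union_le hp0 hp1 _ _).trans (by linarith)

theorem failurePr_superset (B : Finset E) : failurePr p (univ.filter (B ⊆ ·)) = p ^ #B := by
  have himage : univ.filter (B ⊆ ·) = Bᶜ.powerset.image (· ∪ B) := by
    ext F
    simp only [mem_filter, mem_univ, true_and, mem_image, mem_powerset]
    refine ⟨fun h => ⟨F \ B, fun x hx => mem_compl.2 (mem_sdiff.1 hx).2, sdiff_union_of_subset h⟩,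
      ?_⟩
    rintro ⟨G, -, rfl⟩
    exact subset_union_right
  have hdisj : ∀ G ∈ Bᶜ.powerset, Disjoint G B := fun G hG =>
    disjoint_left.2 fun x hx hxB => mem_compl.1 (mem_powerset.1 hG hx) hxB
  have hinj : Set.InjOn (· ∪ B) (Bᶜ.powerset : Set (Finset E)) := fun G hG G' hG' h => by
    simp only at h
    rw [← union_sdiff_cancel_right (hdisj G hG), h, union_sdiff_cancel_right (hdisj G' hG')]
  rw [failurePr, himage, sum_image hinj]
  calc ∑ G ∈ Bᶜ.powerset, p ^ #(G ∪ B) * (1 - p) ^ (Fintype.card E - #(G ∪ B))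
      = ∑ G ∈ Bᶜ.powerset, p ^ #B * (p ^ #G * (1 - p) ^ (#Bᶜ - #G)) := by
        refine sum_congr rfl fun G hG => ?_
        rw [card_union_of_disjoint (hdisj G hG), card_compl, pow_add,
          show Fintype.card E - (#G + #B) = Fintype.card E - #B - #G by omega]
        ring
    _ = p ^ #B := by rw [← mul_sum, sum_pow_mul_eq_add_pow, add_sub_cancel, one_pow, mul_one]

theorem failurePr_le_sum (hp0 : 0 ≤ p) (hp1 : p ≤ 1) {S : Finset (Finset E)} {ι : Type*}
    (T : Finset ι) (B : ι → Finset E) (hS : ∀ F ∈ S, ∃ i ∈ T, B i ⊆ F) :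
    failurePr p S ≤ ∑ i ∈ T, p ^ #(B i) := by
  classical
  have hsub : S ⊆ T.biUnion fun i => univ.filter (B i ⊆ ·) := fun F hF => by
    obtain ⟨i, hi, hBF⟩ := hS F hF
    exact mem_biUnion.2 ⟨i, hi, mem_filter.2 ⟨mem_univ F, hBF⟩⟩
  exact (failurePr_mono hp0 hp1 hsub).trans ((failurePr_biUnion_le hp0 hp1 _ _).trans_eq
    (sum_congr rfl fun i _ => failurePr_superset _))

end FailureProbability

theorem sum_le_sum_range_of_card_le {ι : Type*} (S : Finset ι) (u : ι → ℝ) {g : ℝ → ℝ}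
    (hg : AntitoneOn g (Set.Ici 1))
    (hu : ∀ i ∈ S, (#(S.filter fun j => u j ≤ u i) : ℝ) ≤ u i) :
    ∑ i ∈ S, g (u i) ≤ ∑ j ∈ range #S, g (j + 1) := by
  classical
  induction S using Finset.induction_on_max_value u with
  | empty => simp
  | insert a S ha hmax ih =>
    have hS : ∀ i ∈ S, (#(S.filter fun j => u j ≤ u i) : ℝ) ≤ u i := fun i hi =>
      le_trans (Nat.cast_le.2 (card_le_card (filter_subset_filter _ (subset_insert a S))))
        (hu i (mem_insert_of_mem hi))
    have hua : (#S : ℝ) + 1 ≤ u a := by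
      have := hu a (mem_insert_self a S)
      rwa [filter_true_of_mem fun j hj => (mem_insert.1 hj).elim (fun h => h ▸ le_rfl) (hmax j),
        card_insert_of_notMem ha, Nat.cast_succ] at this
    have h1 : (1 : ℝ) ≤ #S + 1 := by linarith [(Nat.cast_nonneg #S : (0 : ℝ) ≤ #S)]
    rw [sum_insert ha, card_insert_of_notMem ha, sum_range_succ, add_comm]
    exact add_le_add (ih hS) (hg (Set.mem_Ici.2 h1) (Set.mem_Ici.2 (h1.trans hua)) hua)

theorem sum_Ico_rpow_le {a : ℝ} (ha : 0 < a) {J : ℕ} (hJ : 0 < J) (M : ℕ) :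
    ∑ i ∈ Ico J M, ((i : ℝ) + 1) ^ (-(1 + a)) ≤ (J : ℝ) ^ (-a) / a := by
  have hJ1 : (1 : ℝ) ≤ J := Nat.one_le_cast.2 hJ
  rcases le_or_gt M J with hMJ | hJM
  · rw [Ico_eq_empty_of_le hMJ, sum_empty]
    positivity
  have hanti : AntitoneOn (fun x : ℝ => x ^ (-(1 + a))) (Set.Icc (J : ℝ) M) :=
    (Real.antitoneOn_rpow_Ioi_of_exponent_nonpos (by linarith)).mono fun x hx =>
      Set.mem_Ioi.2 (by linarith [hx.1])
  have hzero : (0 : ℝ) ∉ Set.uIcc (J : ℝ) M := by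
    rw [Set.uIcc_of_le (by exact_mod_cast hJM.le)]
    exact fun h => by linarith [h.1]
  have hint := integral_rpow (a := (J : ℝ)) (b := M) (r := -(1 + a)) (Or.inr ⟨by linarith, hzero⟩)
  rw [show -(1 + a) + 1 = -a by ring] at hint
  calc ∑ i ∈ Ico J M, ((i : ℝ) + 1) ^ (-(1 + a))
      ≤ ∫ x in (J : ℝ)..M, x ^ (-(1 + a)) := by
        simpa using hanti.sum_le_integral_Ico hJM.le
    _ = ((J : ℝ) ^ (-a) - (M : ℝ) ^ (-a)) / a := by rw [hint]; field_simp; ring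
    _ ≤ (J : ℝ) ^ (-a) / a := by
        gcongr
        linarith [Real.rpow_nonneg (Nat.cast_nonneg M : (0 : ℝ) ≤ M) (-a)]

theorem sum_range_min_rpow_le {C a : ℝ} (hC : 0 ≤ C) (ha : 0 < a) {J : ℕ} (hJ : 0 < J)
    (M : ℕ) :
    ∑ j ∈ range M, min C (((j : ℝ) + 1) ^ (-(1 + a))) ≤ J * C + (J : ℝ) ^ (-a) / a := by
  set f := fun j : ℕ => min C (((j : ℝ) + 1) ^ (-(1 + a)))
  have hsplit : range M ⊆ range J ∪ Ico J M := fun j hj => by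
    simp only [mem_union, mem_range, mem_Ico] at hj ⊢
    omega
  calc ∑ j ∈ range M, f j ≤ ∑ j ∈ range J ∪ Ico J M, f j :=
        sum_le_sum_of_subset_of_nonneg hsplit fun j _ _ => le_min hC (by positivity)
    _ = ∑ j ∈ range J, f j + ∑ j ∈ Ico J M, f j := by
        rw [sum_union]
        exact disjoint_left.2 fun j hj hj' => by
          simp only [mem_range, mem_Ico] at hj hj'
          omega
    _ ≤ J * C + (J : ℝ) ^ (-a) / a := by
        gcongr
        · simpa using sum_le_card_nsmul (range J) f C fun j _ => min_le_left _ _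
        · exact (sum_le_sum fun j _ => min_le_right _ _).trans (sum_Ico_rpow_le ha hJ M)

theorem pow_eq_rpow_of_pow_eq {p x γ : ℝ} (hp : 0 ≤ p) (hx : 0 ≤ x) {c : ℕ} (hc : 0 < c)
    (h : p ^ c = x ^ γ) (v : ℕ) : p ^ v = x ^ (γ * v / c) := by
  have hcR : (c : ℝ) ≠ 0 := Nat.cast_ne_zero.2 hc.ne'
  calc p ^ v = (p ^ (c : ℝ)) ^ ((v : ℝ) / c) := by
        rw [← Real.rpow_mul hp, mul_div_cancel₀ _ hcR, Real.rpow_natCast]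
    _ = x ^ (γ * v / c) := by rw [Real.rpow_natCast, h, ← Real.rpow_mul hx, mul_div_assoc]

theorem rpow_mul_rpow_add_rpow_div_le {n δ r : ℝ} (hn : 1 ≤ n) (hδ : 0 < δ) (hr : 0 ≤ r) :
    n ^ r * n ^ (-((2 + δ) * r / 2)) + (n ^ r) ^ (-(δ / 2)) / (δ / 2) ≤
      n ^ (-(δ * r / 4)) * (1 + 2 / δ) := by
  have hhead : n ^ r * n ^ (-((2 + δ) * r / 2)) ≤ n ^ (-(δ * r / 4)) := by
    rw [← Real.rpow_add (by linarith)]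
    exact Real.rpow_le_rpow_of_exponent_le hn (by nlinarith)
  have htail : (n ^ r) ^ (-(δ / 2)) / (δ / 2) ≤ n ^ (-(δ * r / 4)) * (2 / δ) := by
    rw [← Real.rpow_mul (by linarith), div_div_eq_mul_div, mul_comm _ (2 : ℝ), ← mul_div_assoc,
      mul_comm (2 : ℝ)]
    gcongr
    nlinarith
  linarith

section CutSum

variable {V E : Type} [Fintype V] [DecidableEq V] [Fintype E] {ends : E → Sym2 V} {c r : ℕ}

theorem IsPartitionInto.card_filter_rpow_le (hn : 1 < Fintype.card V) (hc : 0 < c)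
    (hmin : ∀ A : Finset V, A.Nonempty → Aᶜ.Nonempty → c ≤ cutValue ends A) (hr : 2 ≤ r)
    {P : Finset (Finset V)} (hP : IsPartitionInto P r) :
    let u := fun Q => (Fintype.card V : ℝ) ^ (2 * (rCutValue ends Q : ℝ) / c)
    (#((univ.filter (IsPartitionInto · r)).filter fun Q => u Q ≤ u P) : ℝ) ≤ u P := by
  intro u
  have hiff : ∀ Q, u Q ≤ u P ↔ rCutValue ends Q ≤ rCutValue ends P := fun Q => by
    rw [Real.rpow_le_rpow_left_iff (Nat.one_lt_cast.2 hn),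
      div_le_div_iff_of_pos_right (Nat.cast_pos.2 hc), mul_le_mul_iff_right₀ two_pos, Nat.cast_le]
  have hs : 0 < rCutValue ends P := by
    have := hP.mul_le_two_mul_rCutValue hr hmin
    have := Nat.mul_le_mul hr hc
    omega
  simp only [filter_filter, hiff]
  exact card_filter_rCutValue_le (by omega) hc hmin hs

theorem sum_pow_rCutValue_le (hn : 2 ≤ Fintype.card V) (hc : 0 < c)
    (hmin : ∀ A : Finset V, A.Nonempty → Aᶜ.Nonempty → c ≤ cutValue ends A)
    {p δ : ℝ} (hp0 : 0 ≤ p) (hδ : 0 < δ)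
    (hpc : p ^ c = (Fintype.card V : ℝ) ^ (-(2 + δ))) (hr : 2 ≤ r) :
    ∑ P ∈ univ.filter (IsPartitionInto · r), p ^ rCutValue ends P ≤
      (Fintype.card V : ℝ) ^ (-(δ * r / 4)) * (1 + 2 / δ) := by
  set n : ℝ := (Fintype.card V : ℝ)
  set SP := univ.filter (IsPartitionInto · r : Finset (Finset V) → Prop)
  have hn1 : 1 < n := Nat.one_lt_cast.2 hn
  have hcR : (0 : ℝ) < c := Nat.cast_pos.2 hc
  -- by `card_filter_rpow_le`, the `j`-th cheapest partition has `u ≥ j`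
  set u : Finset (Finset V) → ℝ := fun P => n ^ (2 * (rCutValue ends P : ℝ) / c)
  set C := n ^ (-((2 + δ) * r / 2))
  set g : ℝ → ℝ := fun t => min C (t ^ (-(1 + δ / 2)))
  have hpow : ∀ P ∈ SP, p ^ rCutValue ends P ≤ g (u P) := fun P hP => by
    have hval : (r : ℝ) * c ≤ 2 * rCutValue ends P := by
      exact_mod_cast (mem_filter.1 hP).2.mul_le_two_mul_rCutValue hr hmin
    rw [pow_eq_rpow_of_pow_eq hp0 (by positivity) hc hpc]
    refine le_min (Real.rpow_le_rpow_of_exponent_le hn1.le ?_) (le_of_eq ?_)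
    · rw [div_le_iff₀ hcR]
      nlinarith
    · rw [← Real.rpow_mul (by positivity)]
      ring_nf
  have hg : AntitoneOn g (Set.Ici 1) := fun x hx y _ hxy =>
    min_le_min_left C (Real.rpow_le_rpow_of_nonpos (by linarith [Set.mem_Ici.1 hx]) hxy
      (by linarith))
  set J := Fintype.card V ^ r
  have hJn : (J : ℝ) = n ^ (r : ℝ) := by
    rw [Real.rpow_natCast]; simp only [J, n, Nat.cast_pow]
  calc ∑ P ∈ SP, p ^ rCutValue ends P ≤ ∑ P ∈ SP, g (u P) := sum_le_sum hpow
    _ ≤ ∑ j ∈ range #SP, g (j + 1) := sum_le_sum_range_of_card_le SP u hg fun P hP =>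
        (mem_filter.1 hP).2.card_filter_rpow_le (by omega) hc hmin hr
    _ ≤ J * C + (J : ℝ) ^ (-(δ / 2)) / (δ / 2) :=
        sum_range_min_rpow_le (by positivity) (by positivity) (by positivity) _
    _ ≤ n ^ (-(δ * r / 4)) * (1 + 2 / δ) := by
        rw [hJn]
        exact rpow_mul_rpow_add_rpow_div_le hn1.le hδ (Nat.cast_nonneg r)

end CutSum

theorem stmt10_general {V E : Type} [Fintype V] [DecidableEq V] [Fintype E]
    (ends : E → Sym2 V)
    (hn : 2 ≤ Fintype.card V) (c : ℕ) (hc : 1 ≤ c)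
    (hmin : ∀ A : Finset V, A.Nonempty → Aᶜ.Nonempty → c ≤ cutValue ends A)
    (p δ : ℝ) (hp0 : 0 ≤ p) (hp1 : p ≤ 1) (hδ : 0 < δ)
    (hpc : p ^ c = (Fintype.card V : ℝ) ^ (-(2 + δ)))
    (r : ℕ) (hr2 : 2 ≤ r) :
    failurePr p (Finset.univ.filter (fun F : Finset E =>
        ∃ P : Finset (Finset V), IsPartitionInto P r ∧ rCutEdges ends P ⊆ F))
      ≤ (Fintype.card V : ℝ) ^ (-(δ * r / 4)) * (1 + 2 / δ) := by
  refine (failurePr_le_sum hp0 hp1 (univ.filter (IsPartitionInto · r)) (rCutEdges ends)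
    fun F hF => ?_).trans (sum_pow_rCutValue_le hn hc hmin hp0 hδ hpc hr2)
  obtain ⟨P, hP, hPF⟩ := (mem_filter.1 hF).2
  exact ⟨P, mem_filter.2 ⟨mem_univ P, hP⟩, hPF⟩

/-- Let `G` be a multigraph on `n ≥ 2` vertices with minimum cut value `c ≥ 1`
whose edges fail independently with probability `p ∈ [0,1]`, where `p ^ c = n ^ (-(2+δ))` for
some `δ > 0`.  Then for every integer `r ≥ 2` the probability that some `r`-way cut fails
(all edges of its edge set fail) is at most `n ^ (-δ r / 4) * (1 + 2/δ)`. -/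
theorem stmt10 {V E : Type} [Fintype V] [DecidableEq V] [Fintype E]
    (ends : E → Sym2 V) (hnd : ∀ e, ¬ (ends e).IsDiag)
    (hn : 2 ≤ Fintype.card V) (c : ℕ) (hc : 1 ≤ c)
    (hmin : ∀ A : Finset V, A.Nonempty → Aᶜ.Nonempty → c ≤ cutValue ends A)
    (hex : ∃ A : Finset V, A.Nonempty ∧ Aᶜ.Nonempty ∧ cutValue ends A = c)
    (p δ : ℝ) (hp0 : 0 ≤ p) (hp1 : p ≤ 1) (hδ : 0 < δ)
    (hpc : p ^ c = (Fintype.card V : ℝ) ^ (-(2 + δ)))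
    (r : ℕ) (hr2 : 2 ≤ r) :
    failurePr p (Finset.univ.filter (fun F : Finset E =>
        ∃ P : Finset (Finset V), IsPartitionInto P r ∧ rCutEdges ends P ⊆ F))
      ≤ (Fintype.card V : ℝ) ^ (-(δ * r / 4)) * (1 + 2 / δ) :=
  stmt10_general ends hn c hc hmin p δ hp0 hp1 hδ hpc r hr2
end

section
/- Let G be a multigraph on n ≥ 2 vertices with minimum cut value c, and let r be an integer with 2 ≤ r ≤ n. Then for every r-way cut of G with edge set K, there exists a (2-way) cut of G whose edge set is contained in K and whose value is at least rc/4. -/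
open scoped Classical

section StmtElevenAux

set_option linter.unusedSectionVars false

variable {V E : Type} [Fintype V] [DecidableEq V] [Fintype E]

lemma stmt11_mem_cutEdges {ends : E → Sym2 V} {A : Finset V} {e : E} :
    e ∈ cutEdges ends A ↔ crosses ends A e := by
  simp [cutEdges]

lemma stmt11_mem_rCutEdges {ends : E → Sym2 V} {P : Finset (Finset V)} {e : E} :
    e ∈ rCutEdges ends P ↔ rCrosses ends P e := by
  simp [rCutEdges]

lemma stmt11_part_unique {P : Finset (Finset V)}
    (hdisj : ∀ A ∈ P, ∀ B ∈ P, A ≠ B → Disjoint A B)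
    {x : V} {A B : Finset V} (hA : A ∈ P) (hB : B ∈ P) (hxA : x ∈ A) (hxB : x ∈ B) :
    A = B := by
  by_contra h
  exact (Finset.disjoint_left.mp (hdisj A hA B hB h)) hxA hxB

lemma stmt11_cut_subset (ends : E → Sym2 V) {P S : Finset (Finset V)}
    (hdisj : ∀ A ∈ P, ∀ B ∈ P, A ≠ B → Disjoint A B) (hS : S ⊆ P) :
    cutEdges ends (S.biUnion id) ⊆ rCutEdges ends P := by
  intro e he
  rw [stmt11_mem_cutEdges] at he
  obtain ⟨⟨x, hx, hxU⟩, ⟨y, hy, hyU⟩⟩ := he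
  rw [stmt11_mem_rCutEdges]
  rintro ⟨A, hA, hall⟩
  obtain ⟨B, hB, hxB⟩ := Finset.mem_biUnion.mp hxU
  have hAB : A = B := stmt11_part_unique hdisj hA (hS hB) (hall x hx) hxB
  exact hyU (Finset.mem_biUnion.mpr ⟨B, hB, by rw [← hAB]; exact hall y hy⟩)

lemma stmt11_cutValue_eq_sum (ends : E → Sym2 V) (A : Finset V) :
    cutValue ends A = ∑ e : E, if crosses ends A e then 1 else 0 := by
  rw [cutValue, cutEdges, Finset.card_filter]

lemma stmt11_sum_parts_le (ends : E → Sym2 V)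
    {P : Finset (Finset V)}
    (hdisj : ∀ A ∈ P, ∀ B ∈ P, A ≠ B → Disjoint A B)
    (hcov : ∀ x : V, ∃ A ∈ P, x ∈ A) :
    ∑ A ∈ P, cutValue ends A ≤ 2 * rCutValue ends P := by
  calc ∑ A ∈ P, cutValue ends A
      = ∑ A ∈ P, ∑ e : E, (if crosses ends A e then 1 else 0) := by
        exact Finset.sum_congr rfl fun A _ => stmt11_cutValue_eq_sum ends A
    _ = ∑ e : E, ∑ A ∈ P, (if crosses ends A e then 1 else 0) := Finset.sum_comm
    _ ≤ ∑ e : E, (if rCrosses ends P e then 2 else 0) := by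
        apply Finset.sum_le_sum
        intro e _
        rw [← Finset.card_filter]
        by_cases h : rCrosses ends P e
        · simp only [h, if_true]
          obtain ⟨⟨x, y⟩, hxy'⟩ := Quot.exists_rep (ends e)
          have hxy : ends e = s(x, y) := hxy'.symm
          obtain ⟨Ax, hAx, hxAx⟩ := hcov x
          obtain ⟨Ay, hAy, hyAy⟩ := hcov y
          have hsub : (P.filter fun A => crosses ends A e) ⊆ {Ax, Ay} := by
            intro B hB
            obtain ⟨hBP, ⟨z, hz, hzB⟩, -⟩ := Finset.mem_filter.mp hB
            rw [hxy, Sym2.mem_iff] at hz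
            rcases hz with rfl | rfl
            · exact Finset.mem_insert.mpr (Or.inl
                (stmt11_part_unique hdisj hBP hAx hzB hxAx))
            · exact Finset.mem_insert.mpr (Or.inr (Finset.mem_singleton.mpr
                (stmt11_part_unique hdisj hBP hAy hzB hyAy)))
          calc (P.filter fun A => crosses ends A e).card
              ≤ ({Ax, Ay} : Finset (Finset V)).card := Finset.card_le_card hsub
            _ ≤ 2 := Finset.card_insert_le _ _ |>.trans (by simp)
        · simp only [h, if_false, Nat.le_zero, Finset.card_eq_zero]
          obtain ⟨A, hA, hall⟩ := not_not.mp h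
          apply Finset.eq_empty_of_forall_notMem
          intro B hB
          obtain ⟨hBP, ⟨z, hz, hzB⟩, ⟨w, hw, hwB⟩⟩ := Finset.mem_filter.mp hB
          have : A = B := stmt11_part_unique hdisj hA hBP (hall z hz) hzB
          exact hwB (by rw [← this]; exact hall w hw)
    _ = 2 * rCutValue ends P := by
        rw [rCutValue, rCutEdges, Finset.card_filter, Finset.mul_sum]
        exact Finset.sum_congr rfl fun e _ => by split_ifs <;> simp

lemma stmt11_count_powerset (ends : E → Sym2 V) (hnd : ∀ e, ¬ (ends e).IsDiag)
    {P : Finset (Finset V)}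
    (hdisj : ∀ A ∈ P, ∀ B ∈ P, A ≠ B → Disjoint A B)
    (hcov : ∀ x : V, ∃ A ∈ P, x ∈ A)
    {e : E} (he : rCrosses ends P e) :
    ∑ S ∈ P.powerset, (if crosses ends (S.biUnion id) e then 1 else 0) =
      2 ^ (P.card - 1) := by
  obtain ⟨⟨x, y⟩, hxy'⟩ := Quot.exists_rep (ends e)
  have hxy : ends e = s(x, y) := hxy'.symm
  have hne : x ≠ y := by
    have := hnd e
    rw [hxy, Sym2.mk_isDiag_iff] at this
    exact this
  obtain ⟨Ax, hAx, hxAx⟩ := hcov x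
  obtain ⟨Ay, hAy, hyAy⟩ := hcov y
  have hAxy : Ax ≠ Ay := by
    intro hEq
    apply he
    refine ⟨Ax, hAx, fun z hz => ?_⟩
    rw [hxy, Sym2.mem_iff] at hz
    rcases hz with rfl | rfl
    · exact hxAx
    · rw [hEq]; exact hyAy
  have hnotmem : Ay ∉ P.erase Ay := Finset.notMem_erase _ _
  have hins : insert Ay (P.erase Ay) = P := Finset.insert_erase hAy
  rw [← hins, Finset.sum_powerset_insert hnotmem, ← Finset.sum_add_distrib]
  have hone : ∀ T ∈ (P.erase Ay).powerset,
      ((if crosses ends (T.biUnion id) e then 1 else 0) +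
       (if crosses ends ((insert Ay T).biUnion id) e then 1 else 0)) = 1 := by
    intro T hT
    have hTsub : T ⊆ P.erase Ay := Finset.mem_powerset.mp hT
    have hTP : T ⊆ P := hTsub.trans (Finset.erase_subset _ _)
    have key1 : y ∉ T.biUnion id := by
      intro hyU
      obtain ⟨B, hB, hyB⟩ := Finset.mem_biUnion.mp hyU
      have : B = Ay := stmt11_part_unique hdisj (hTP hB) hAy hyB hyAy
      exact (Finset.ne_of_mem_erase (hTsub hB)) this
    have key2 : y ∈ (insert Ay T).biUnion id :=
      Finset.mem_biUnion.mpr ⟨Ay, Finset.mem_insert_self _ _, hyAy⟩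
    have key3 : x ∈ (insert Ay T).biUnion id ↔ x ∈ T.biUnion id := by
      constructor
      · intro hxU
        obtain ⟨B, hB, hxB⟩ := Finset.mem_biUnion.mp hxU
        rcases Finset.mem_insert.mp hB with rfl | hB'
        · exact absurd (stmt11_part_unique hdisj hAx hAy hxAx hxB) hAxy
        · exact Finset.mem_biUnion.mpr ⟨B, hB', hxB⟩
      · intro hxU
        obtain ⟨B, hB, hxB⟩ := Finset.mem_biUnion.mp hxU
        exact Finset.mem_biUnion.mpr ⟨B, Finset.mem_insert_of_mem hB, hxB⟩
    have hxmem : x ∈ ends e := by rw [hxy]; exact Sym2.mem_mk_left x y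
    have hymem : y ∈ ends e := by rw [hxy]; exact Sym2.mem_mk_right x y
    have crossT : crosses ends (T.biUnion id) e ↔ x ∈ T.biUnion id := by
      constructor
      · rintro ⟨⟨z, hz, hzU⟩, -⟩
        rw [hxy, Sym2.mem_iff] at hz
        rcases hz with rfl | rfl
        · exact hzU
        · exact absurd hzU key1
      · intro hx
        exact ⟨⟨x, hxmem, hx⟩, ⟨y, hymem, key1⟩⟩
    have crossI : crosses ends ((insert Ay T).biUnion id) e ↔ x ∉ T.biUnion id := by
      constructor
      · rintro ⟨-, ⟨w, hw, hwU⟩⟩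
        rw [hxy, Sym2.mem_iff] at hw
        rcases hw with rfl | rfl
        · exact fun hx => hwU (key3.mpr hx)
        · exact absurd key2 hwU
      · intro hx
        exact ⟨⟨y, hymem, key2⟩, ⟨x, hxmem, fun h => hx (key3.mp h)⟩⟩
    by_cases hx : x ∈ T.biUnion id
    · rw [if_pos (crossT.mpr hx), if_neg (fun h => (crossI.mp h) hx)]
    · rw [if_neg (fun h => hx (crossT.mp h)), if_pos (crossI.mpr hx)]
  rw [Finset.sum_congr rfl hone, Finset.sum_const, smul_eq_mul, mul_one,
    Finset.card_powerset, Finset.card_erase_of_mem hAy, hins]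

lemma stmt11_sum_powerset_ge (ends : E → Sym2 V) (hnd : ∀ e, ¬ (ends e).IsDiag)
    {P : Finset (Finset V)}
    (hdisj : ∀ A ∈ P, ∀ B ∈ P, A ≠ B → Disjoint A B)
    (hcov : ∀ x : V, ∃ A ∈ P, x ∈ A) :
    2 ^ (P.card - 1) * rCutValue ends P ≤
      ∑ S ∈ P.powerset, cutValue ends (S.biUnion id) := by
  have h1 : ∑ S ∈ P.powerset, cutValue ends (S.biUnion id)
      = ∑ e : E, ∑ S ∈ P.powerset, (if crosses ends (S.biUnion id) e then 1 else 0) := by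
    rw [← Finset.sum_comm]
    exact Finset.sum_congr rfl fun S _ => stmt11_cutValue_eq_sum ends _
  rw [h1]
  have h2 : 2 ^ (P.card - 1) * rCutValue ends P
      = ∑ e : E, (if rCrosses ends P e then 2 ^ (P.card - 1) else 0) := by
    rw [rCutValue, rCutEdges, Finset.card_filter, Finset.mul_sum]
    exact Finset.sum_congr rfl fun e _ => by split_ifs <;> simp
  rw [h2]
  apply Finset.sum_le_sum
  intro e _
  by_cases h : rCrosses ends P e
  · rw [if_pos h, stmt11_count_powerset ends hnd hdisj hcov h]
  · rw [if_neg h]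
    exact Nat.zero_le _

end StmtElevenAux

/-- Let `G` be a multigraph on `n ≥ 2` vertices with minimum cut value `c`,
and let `r` be an integer with `2 ≤ r ≤ n`.  Then for every `r`-way cut of `G` (with edge set
`K`) there is a 2-way cut of `G` whose edge set is contained in `K` and whose value is at least
`r c / 4`. -/
theorem stmt11 {V E : Type} [Fintype V] [DecidableEq V] [Fintype E]
    (ends : E → Sym2 V) (hnd : ∀ e, ¬ (ends e).IsDiag)
    (hn : 2 ≤ Fintype.card V) (c : ℕ)
    (hmin : ∀ A : Finset V, A.Nonempty → Aᶜ.Nonempty → c ≤ cutValue ends A)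
    (hex : ∃ A : Finset V, A.Nonempty ∧ Aᶜ.Nonempty ∧ cutValue ends A = c)
    (r : ℕ) (hr2 : 2 ≤ r) (hrn : r ≤ Fintype.card V) :
    ∀ P : Finset (Finset V), IsPartitionInto P r →
      ∃ A : Finset V, A.Nonempty ∧ Aᶜ.Nonempty ∧
        cutEdges ends A ⊆ rCutEdges ends P ∧
        ((r : ℝ) * c / 4) ≤ (cutValue ends A : ℝ) := by
  intro P hP
  obtain ⟨hPcard, hPne, hPdisj, hPcov⟩ := hP
  have hP1 : 1 < P.card := by omega
  -- every part has a nonempty complement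
  have hcompl : ∀ A ∈ P, Aᶜ.Nonempty := by
    intro A hA
    obtain ⟨B, hB, hBA⟩ := Finset.exists_mem_ne hP1 A
    obtain ⟨b, hb⟩ := hPne B hB
    exact ⟨b, Finset.mem_compl.mpr
      (Finset.disjoint_left.mp (hPdisj B hB A hA hBA) hb)⟩
  by_cases hc : c = 0
  · -- trivial case: pick any single part
    obtain ⟨A₀, hA₀⟩ : P.Nonempty := Finset.card_pos.mp (by omega)
    refine ⟨A₀, hPne A₀ hA₀, hcompl A₀ hA₀, ?_, ?_⟩
    · have : ({A₀} : Finset (Finset V)).biUnion id = A₀ := by simp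
      rw [← this]
      exact stmt11_cut_subset ends hPdisj (Finset.singleton_subset_iff.mpr hA₀)
    · rw [hc]
      simp
  · -- main case
    have hrc : r * c ≤ 2 * rCutValue ends P := by
      calc r * c = ∑ _A ∈ P, c := by
            rw [Finset.sum_const, smul_eq_mul, hPcard]
        _ ≤ ∑ A ∈ P, cutValue ends A :=
            Finset.sum_le_sum fun A hA => hmin A (hPne A hA) (hcompl A hA)
        _ ≤ 2 * rCutValue ends P := stmt11_sum_parts_le ends hPdisj hPcov
    -- averaging over the powerset
    have hsum : ∑ _S ∈ P.powerset, rCutValue ends P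
        ≤ ∑ S ∈ P.powerset, 2 * cutValue ends (S.biUnion id) := by
      rw [Finset.sum_const, smul_eq_mul, Finset.card_powerset, ← Finset.mul_sum]
      calc 2 ^ P.card * rCutValue ends P
          = 2 * (2 ^ (P.card - 1) * rCutValue ends P) := by
            rw [← mul_assoc]
            congr 1
            have : P.card - 1 + 1 = P.card := by omega
            rw [← pow_succ']
            rw [this]
        _ ≤ 2 * ∑ S ∈ P.powerset, cutValue ends (S.biUnion id) :=
            Nat.mul_le_mul_left 2 (stmt11_sum_powerset_ge ends hnd hPdisj hPcov)
    obtain ⟨S, hSmem, hS⟩ := Finset.exists_le_of_sum_le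
      ⟨∅, Finset.empty_mem_powerset P⟩ hsum
    set A := S.biUnion id with hAdef
    have hrcA : r * c ≤ 4 * cutValue ends A := by
      calc r * c ≤ 2 * rCutValue ends P := hrc
        _ ≤ 2 * (2 * cutValue ends A) := Nat.mul_le_mul_left 2 hS
        _ = 4 * cutValue ends A := by ring
    have hpos : 0 < cutValue ends A := by
      have : 0 < r * c := Nat.mul_pos (by omega) (Nat.pos_of_ne_zero hc)
      omega
    obtain ⟨e, he⟩ := Finset.card_pos.mp hpos
    obtain ⟨⟨x, hx, hxA⟩, ⟨y, hy, hyA⟩⟩ := stmt11_mem_cutEdges.mp he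
    refine ⟨A, ⟨x, hxA⟩, ⟨y, Finset.mem_compl.mpr hyA⟩,
      stmt11_cut_subset ends hPdisj (Finset.mem_powerset.mp hSmem), ?_⟩
    rw [div_le_iff₀ (by norm_num)]
    calc (r : ℝ) * c = ((r * c : ℕ) : ℝ) := by push_cast; ring
      _ ≤ ((4 * cutValue ends A : ℕ) : ℝ) := Nat.cast_le.mpr hrcA
      _ = (cutValue ends A : ℝ) * 4 := by push_cast; ring
end

section
/- Let G be a connected multigraph on n ≥ 2 vertices with minimum cut value c, where c is even, and let C_n denote the multigraph on vertices 0, 1, …, n−1 arranged in a cycle with exactly c/2 parallel edges between each pair of consecutive vertices (indices mod n). Suppose in each graph every edge fails independently with probability p ∈ [0,1], and for a multigraph H let FAIL_r(H, p) denote the probability that the surviving graph has r or more connected components. Then for every integer r, FAIL_r(G, p) ≤ FAIL_r(C_n, p). -/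
open scoped Classical

/-- The cycle multigraph on the `n` vertices `0, 1, …, n-1` with exactly `b` parallel edges
between each pair of consecutive vertices (indices mod `n`): edge `(i, j)` joins `i` to
`i + 1 (mod n)`. -/
def cycleEnds (n b : ℕ) : Fin n × Fin b → Sym2 (Fin n) :=
  fun ei => s(ei.1, finRotate n ei.1)

/-!
Let `U_r(H, p)` be the probability that at least `r` components survive. Russo's formula gives
`p U_r'(p) = E[#pivotal failed edges]`, an edge being pivotal when repairing it leaves fewer than
`r` components. If exactly `r ≥ 2` components survive in `G`, each of them is one side of a cut
with at least `c` edges, all failed and joining distinct components; so at least `r c / 2` failed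
edges are pivotal. In `Cₙ` the pivotal edges lie in the `r` fully failed bundles, so there are at
most `r c / 2` of them. Hence `p U_r' ≥ (r c / 2) (U_r - U_{r+1})` for `G` and `≤` for `Cₙ`, and
by downward induction on `r` the difference `D = U_r(Cₙ) - U_r(G)` satisfies
`p D' ≤ (r c / 2) D` on `(0, 1]` with `D(1) = 0`. Then `D / p ^ (r c / 2)` is antitone, so
`D ≥ 0`.
-/

lemma nonneg_of_mul_deriv_le {D : ℝ → ℝ} {k : ℝ} (hD : Differentiable ℝ D) (h1 : 0 ≤ D 1)
    (hineq : ∀ x ∈ Set.Ioc (0 : ℝ) 1, x * deriv D x ≤ k * D x) :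
    ∀ x ∈ Set.Icc (0 : ℝ) 1, 0 ≤ D x := by
  have hder : ∀ x ∈ Set.Ioi (0 : ℝ), HasDerivAt (fun y => D y * y ^ (-k))
      (deriv D x * x ^ (-k) + D x * (-k * x ^ (-k - 1))) x := fun x hx =>
    (hD x).hasDerivAt.mul (Real.hasDerivAt_rpow_const (Or.inl hx.ne'))
  have hanti : AntitoneOn (fun y => D y * y ^ (-k)) (Set.Ioc 0 1) := by
    refine antitoneOn_of_deriv_nonpos (convex_Ioc 0 1) ?_ ?_ ?_
    · exact fun x hx => (hder x hx.1).continuousAt.continuousWithinAt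
    · exact fun x hx => (hder x (interior_subset hx).1).differentiableAt.differentiableWithinAt
    · intro x hx
      rw [interior_Ioc] at hx
      have hx0 : 0 < x := hx.1
      rw [(hder x hx0).deriv, Real.rpow_sub_one hx0.ne']
      have := hineq x (Set.Ioo_subset_Ioc_self hx)
      have hpos : 0 < x ^ (-k) := Real.rpow_pos_of_pos hx0 _
      rw [show deriv D x * x ^ (-k) + D x * (-k * (x ^ (-k) / x))
          = x ^ (-k) / x * (x * deriv D x - k * D x) by field_simp; ring]
      exact mul_nonpos_of_nonneg_of_nonpos (by positivity) (by linarith)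
  have hIoc : Set.Ioc (0 : ℝ) 1 ⊆ {x | 0 ≤ D x} := by
    intro x hx
    have hmono := hanti hx ⟨one_pos, le_rfl⟩ hx.2
    simp only [Real.one_rpow, mul_one] at hmono
    exact nonneg_of_mul_nonneg_left (h1.trans hmono) (Real.rpow_pos_of_pos hx.1 _)
  rw [← closure_Ioc zero_ne_one]
  exact closure_minimal hIoc (isClosed_le continuous_const hD.continuous)

section BernoulliProduct

variable {E : Type} [Fintype E]

noncomputable def bernoulliWeight (p : ℝ) (F : Finset E) : ℝ :=
  p ^ F.card * (1 - p) ^ (Fintype.card E - F.card)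

noncomputable def bernoulliExpect (p : ℝ) (φ : Finset E → ℝ) : ℝ :=
  ∑ F, φ F * bernoulliWeight p F

noncomputable def pivotalSum [DecidableEq E] (φ : Finset E → ℝ) (F : Finset E) : ℝ :=
  ∑ e ∈ F, (φ F - φ (F.erase e))

lemma failurePr_filter (p : ℝ) (P : Finset E → Prop) [DecidablePred P] :
    failurePr p (Finset.univ.filter P) = bernoulliExpect p (fun F => if P F then 1 else 0) := by
  simp [failurePr, bernoulliExpect, bernoulliWeight, Finset.sum_filter]

lemma bernoulliWeight_nonneg {p : ℝ} (hp : p ∈ Set.Icc (0 : ℝ) 1) (F : Finset E) :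
    0 ≤ bernoulliWeight p F :=
  mul_nonneg (pow_nonneg hp.1 _) (pow_nonneg (sub_nonneg.2 hp.2) _)

lemma sum_bernoulliWeight (p : ℝ) : ∑ F : Finset E, bernoulliWeight p F = 1 := by
  simp [bernoulliWeight, Fintype.sum_pow_mul_eq_add_pow]

lemma bernoulliExpect_mono {p : ℝ} (hp : p ∈ Set.Icc (0 : ℝ) 1) {φ ψ : Finset E → ℝ}
    (h : ∀ F, φ F ≤ ψ F) : bernoulliExpect p φ ≤ bernoulliExpect p ψ :=
  Finset.sum_le_sum fun F _ => mul_le_mul_of_nonneg_right (h F) (bernoulliWeight_nonneg hp F)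

lemma bernoulliExpect_const (p c : ℝ) : bernoulliExpect p (fun _ : Finset E => c) = c := by
  rw [bernoulliExpect, ← Finset.mul_sum, sum_bernoulliWeight, mul_one]

lemma bernoulliExpect_const_mul_sub (p c : ℝ) (φ ψ : Finset E → ℝ) :
    bernoulliExpect p (fun F => c * (φ F - ψ F))
      = c * (bernoulliExpect p φ - bernoulliExpect p ψ) := by
  simp only [bernoulliExpect, Finset.mul_sum, ← Finset.sum_sub_distrib]
  exact Finset.sum_congr rfl fun F _ => by ring

lemma bernoulliExpect_one (φ : Finset E → ℝ) : bernoulliExpect 1 φ = φ Finset.univ := by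
  rw [bernoulliExpect, Finset.sum_eq_single Finset.univ]
  · simp [bernoulliWeight]
  · intro F _ hF
    have : F.card < Fintype.card E := (Finset.card_lt_iff_ne_univ F).2 hF
    simp [bernoulliWeight, Nat.sub_ne_zero_of_lt this]
  · simp

lemma differentiable_bernoulliWeight (F : Finset E) :
    Differentiable ℝ (fun p => bernoulliWeight p F) := by
  unfold bernoulliWeight; fun_prop

lemma differentiable_bernoulliExpect (φ : Finset E → ℝ) :
    Differentiable ℝ (fun p => bernoulliExpect p φ) := by
  unfold bernoulliExpect bernoulliWeight; fun_prop

/-- The term `p ^ (|F| + 1) * (1 - p) ^ (|Fᶜ| - 1)` of the derivative is the weight of `F` with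
one more failed edge. -/
lemma mul_deriv_bernoulliWeight [DecidableEq E] (p : ℝ) (F : Finset E) :
    p * deriv (fun q => bernoulliWeight q F) p
      = F.card * bernoulliWeight p F - ∑ e ∈ Fᶜ, bernoulliWeight p (insert e F) := by
  have hd : HasDerivAt (fun q => bernoulliWeight q F)
      (F.card * p ^ (F.card - 1) * (1 - p) ^ (Fintype.card E - F.card)
        + p ^ F.card * ((Fintype.card E - F.card : ℕ) * (1 - p) ^ (Fintype.card E - F.card - 1)
          * (-1))) p :=
    (hasDerivAt_pow _ p).mul ((hasDerivAt_pow _ (1 - p)).comp p ((hasDerivAt_id p).const_sub 1))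
  have hins : ∀ e ∈ Fᶜ, bernoulliWeight p (insert e F)
      = p ^ (F.card + 1) * (1 - p) ^ (Fintype.card E - F.card - 1) := by
    intro e he
    rw [bernoulliWeight, Finset.card_insert_of_notMem (Finset.mem_compl.1 he), Nat.sub_sub]
  rw [hd.deriv, Finset.sum_congr rfl hins, Finset.sum_const, Finset.card_compl, nsmul_eq_mul,
    bernoulliWeight]
  generalize Fintype.card E - F.card = j
  generalize F.card = k
  rcases k with _ | k <;> rcases j with _ | j <;>
    simp only [Nat.cast_zero, add_tsub_cancel_right] <;> push_cast <;> ring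

end BernoulliProduct

section Russo

variable {E : Type} [Fintype E] [DecidableEq E]

lemma sum_sum_compl_insert {M : Type*} [AddCommMonoid M] (g : Finset E → Finset E → M) :
    ∑ F, ∑ e ∈ Fᶜ, g F (insert e F) = ∑ G, ∑ e ∈ G, g (G.erase e) G := by
  rw [Finset.sum_sigma', Finset.sum_sigma']
  refine Finset.sum_nbij' (fun x => ⟨insert x.2 x.1, x.2⟩) (fun x => ⟨x.1.erase x.2, x.2⟩)
    ?_ ?_ ?_ ?_ ?_ <;> simp +contextual [Finset.insert_erase]

/-- Russo's formula. -/
lemma mul_deriv_bernoulliExpect (φ : Finset E → ℝ) (p : ℝ) :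
    p * deriv (fun q => bernoulliExpect q φ) p = bernoulliExpect p (pivotalSum φ) := by
  have hsum : deriv (fun q => bernoulliExpect q φ) p
      = ∑ F, φ F * deriv (fun q => bernoulliWeight q F) p := by
    simp only [bernoulliExpect]
    rw [deriv_fun_sum fun F _ => ((differentiable_bernoulliWeight F p).const_mul (φ F))]
    exact Finset.sum_congr rfl fun F _ => deriv_const_mul _ (differentiable_bernoulliWeight F p)
  calc p * deriv (fun q => bernoulliExpect q φ) p
      = ∑ F, φ F * (F.card * bernoulliWeight p F - ∑ e ∈ Fᶜ, bernoulliWeight p (insert e F)) := by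
        rw [hsum, Finset.mul_sum]
        exact Finset.sum_congr rfl fun F _ => by rw [mul_left_comm, mul_deriv_bernoulliWeight]
    _ = ∑ G, (∑ e ∈ G, φ G) * bernoulliWeight p G
          - ∑ G, ∑ e ∈ G, φ (G.erase e) * bernoulliWeight p G := by
        rw [← sum_sum_compl_insert fun F G => φ F * bernoulliWeight p G, ← Finset.sum_sub_distrib]
        refine Finset.sum_congr rfl fun F _ => ?_
        rw [Finset.sum_const, nsmul_eq_mul, mul_sub, Finset.mul_sum]
        ring
    _ = bernoulliExpect p (pivotalSum φ) := by
        simp only [bernoulliExpect, pivotalSum, ← Finset.sum_mul, ← Finset.sum_sub_distrib,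
          ← sub_mul]

end Russo

namespace SimpleGraph

variable {V : Type*}

lemma Reachable.eq_of_forall_adj {G : SimpleGraph V} {β : Sort*} (f : V → β)
    (hf : ∀ v w, G.Adj v w → f v = f w) {v w : V} (h : G.Reachable v w) : f v = f w := by
  obtain ⟨p⟩ := h
  induction p with
  | nil => rfl
  | cons h _ ih => exact (hf _ _ h).trans ih

lemma card_connectedComponent_bot : Nat.card (⊥ : SimpleGraph V).ConnectedComponent = Nat.card V :=
  (Nat.card_eq_of_bijective _ ⟨fun _ _ h => reachable_bot.1 (ConnectedComponent.eq.1 h),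
    fun C => C.exists_rep⟩).symm

variable [Finite V]

lemma card_connectedComponent_le_card (G : SimpleGraph V) :
    Nat.card G.ConnectedComponent ≤ Nat.card V :=
  card_connectedComponent_bot (V := V) ▸ ConnectedComponent.card_le_card_of_le bot_le

lemma ConnectedComponent.card_lt_card_of_le_of_adj {G G' : SimpleGraph V} (h : G ≤ G') {x y : V}
    (hxy : G'.Adj x y) (hne : G.connectedComponentMk x ≠ G.connectedComponentMk y) :
    Nat.card G'.ConnectedComponent < Nat.card G.ConnectedComponent := by
  have := Fintype.ofFinite G.ConnectedComponent
  have := Fintype.ofFinite G'.ConnectedComponent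
  simp only [Nat.card_eq_fintype_card]
  refine Fintype.card_lt_of_surjective_not_injective _ (surjective_map_ofLE h) fun hinj => hne ?_
  exact hinj (by simpa using hxy.reachable)

end SimpleGraph

section Multigraph

variable {V E : Type} (ends : E → Sym2 V)

lemma survGraph_adj {F : Finset E} {x y : V} :
    (survGraph ends F).Adj x y ↔ x ≠ y ∧ ∃ e ∉ F, ends e = s(x, y) := by
  simp [survGraph, Sym2.eq_swap]

lemma survGraph_anti : Antitone (survGraph ends) := fun _ _ hFF' _ _ h => by
  obtain ⟨hne, e, he, hxy⟩ := (survGraph_adj ends).1 h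
  exact (survGraph_adj ends).2 ⟨hne, e, fun h' => he (hFF' h'), hxy⟩

lemma survGraph_univ [Fintype E] : survGraph ends Finset.univ = ⊥ := by
  ext; simp [survGraph_adj]

lemma connectedComponentMk_eq_of_notMem {F : Finset E} {e : E} (he : e ∉ F) {x y : V}
    (hx : x ∈ ends e) (hy : y ∈ ends e) :
    (survGraph ends F).connectedComponentMk x = (survGraph ends F).connectedComponentMk y := by
  by_cases hxy : x = y
  · rw [hxy]
  · exact SimpleGraph.ConnectedComponent.eq.2 <| SimpleGraph.Adj.reachable <|
      (survGraph_adj ends).2 ⟨hxy, e, he, (Sym2.mem_and_mem_iff hxy).1 ⟨hx, hy⟩⟩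

lemma numComponents_univ [Fintype E] : numComponents ends Finset.univ = Nat.card V := by
  rw [numComponents, survGraph_univ, SimpleGraph.card_connectedComponent_bot]

variable [Finite V]

lemma numComponents_mono : Monotone (numComponents ends) := fun _ _ h =>
  SimpleGraph.ConnectedComponent.card_le_card_of_le (survGraph_anti ends h)

lemma numComponents_le_card (F : Finset E) : numComponents ends F ≤ Nat.card V :=
  SimpleGraph.card_connectedComponent_le_card _

lemma one_le_numComponents [Nonempty V] (F : Finset E) : 1 ≤ numComponents ends F :=
  Nat.card_pos (α := (survGraph ends F).ConnectedComponent)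

lemma numComponents_erase_lt [DecidableEq E] {F : Finset E} {e : E} {x y : V} (hx : x ∈ ends e)
    (hy : y ∈ ends e)
    (hne : (survGraph ends F).connectedComponentMk x ≠ (survGraph ends F).connectedComponentMk y) :
    numComponents ends (F.erase e) < numComponents ends F := by
  have hxy : x ≠ y := by rintro rfl; exact hne rfl
  refine SimpleGraph.ConnectedComponent.card_lt_card_of_le_of_adj
    (survGraph_anti ends (Finset.erase_subset e F)) ((survGraph_adj ends).2 ?_) hne
  exact ⟨hxy, e, Finset.notMem_erase e F, (Sym2.mem_and_mem_iff hxy).1 ⟨hx, hy⟩⟩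

end Multigraph

section ComponentCount

variable {V E : Type} (ends : E → Sym2 V)

noncomputable def atLeastComponents (r : ℕ) (F : Finset E) : ℝ :=
  if r ≤ numComponents ends F then 1 else 0

lemma atLeastComponents_sub_succ (r : ℕ) (F : Finset E) :
    atLeastComponents ends r F - atLeastComponents ends (r + 1) F
      = if numComponents ends F = r then 1 else 0 := by
  unfold atLeastComponents
  split_ifs <;> first | (exfalso; omega) | norm_num

lemma pivotalSum_atLeastComponents [Finite V] [DecidableEq E] (r : ℕ) (F : Finset E) :
    pivotalSum (atLeastComponents ends r) F
      = (F.filter fun e => numComponents ends (F.erase e) < r ∧ r ≤ numComponents ends F).card := by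
  rw [Finset.card_filter, Nat.cast_sum, pivotalSum]
  refine Finset.sum_congr rfl fun e _ => ?_
  have := numComponents_mono ends (Finset.erase_subset e F)
  unfold atLeastComponents
  split_ifs <;> first | (exfalso; omega) | norm_num

lemma atLeastComponents_of_card_lt [Finite V] {r : ℕ} (hr : Nat.card V < r) :
    atLeastComponents ends r = fun _ => 0 :=
  funext fun F => if_neg (by have := numComponents_le_card ends F; omega)

lemma atLeastComponents_of_le_one [Finite V] [Nonempty V] {r : ℕ} (hr : r ≤ 1) :
    atLeastComponents ends r = fun _ => 1 :=
  funext fun F => if_pos (hr.trans (one_le_numComponents ends F))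

lemma failurePr_eq_bernoulliExpect_atLeastComponents [Fintype E] (p : ℝ) (r : ℤ) :
    failurePr p (Finset.univ.filter fun F : Finset E => r ≤ (numComponents ends F : ℤ))
      = bernoulliExpect p (atLeastComponents ends r.toNat) := by
  rw [failurePr_filter]
  congr 1
  funext F
  simp only [atLeastComponents, Int.toNat_le]

end ComponentCount

section MinCut

variable {V E : Type} [Fintype V] [DecidableEq V] [Fintype E] [DecidableEq E] (ends : E → Sym2 V)

noncomputable def crossingEdges (F : Finset E) : Finset E :=
  F.filter fun e => ∃ x ∈ ends e, ∃ y ∈ ends e,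
    (survGraph ends F).connectedComponentMk x ≠ (survGraph ends F).connectedComponentMk y

/-- Every component is a side of a cut of value at least `c`, and such a cut consists of
crossing edges; each crossing edge lies in the cuts of at most two components. -/
lemma numComponents_mul_le_two_mul_card_crossingEdges {c : ℕ}
    (hmin : ∀ A : Finset V, A.Nonempty → Aᶜ.Nonempty → c ≤ cutValue ends A) {F : Finset E}
    (hF : 2 ≤ numComponents ends F) :
    numComponents ends F * c ≤ 2 * (crossingEdges ends F).card := by
  set G := survGraph ends F
  set X := crossingEdges ends F
  let side : G.ConnectedComponent → Finset V := fun K => Finset.univ.filter fun v =>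
    G.connectedComponentMk v = K
  have hcut : ∀ K, c ≤ (X.filter (crosses ends (side K))).card := by
    intro K
    obtain ⟨v, hv⟩ : ∃ v, G.connectedComponentMk v = K := K.exists_rep
    have : Nontrivial G.ConnectedComponent := by
      rw [← Finite.one_lt_card_iff_nontrivial]; exact hF
    obtain ⟨K', hK'⟩ := exists_ne K
    obtain ⟨w, hw⟩ : ∃ w, G.connectedComponentMk w = K' := K'.exists_rep
    refine (hmin (side K) ⟨v, by simp [side, hv]⟩ ⟨w, by simp [side, hw, hK']⟩).trans
      (Finset.card_le_card fun e he => ?_)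
    obtain ⟨⟨x, hx, hxK⟩, ⟨y, hy, hyK⟩⟩ := (Finset.mem_filter.1 he).2
    simp only [side, Finset.mem_filter, Finset.mem_univ, true_and] at hxK hyK
    have hxy : G.connectedComponentMk x ≠ G.connectedComponentMk y := hxK ▸ Ne.symm hyK
    have heF : e ∈ F := by
      by_contra heF
      exact hxy (connectedComponentMk_eq_of_notMem ends heF hx hy)
    exact Finset.mem_filter.2 ⟨Finset.mem_filter.2 ⟨heF, x, hx, y, hy, hxy⟩,
      (Finset.mem_filter.1 he).2⟩
  have htwo : ∀ e ∈ X, (Finset.univ.filter fun K => crosses ends (side K) e).card ≤ 2 := by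
    intro e _
    calc _ ≤ (Sym2.map G.connectedComponentMk (ends e)).toFinset.card := by
          refine Finset.card_le_card fun K hK => ?_
          obtain ⟨⟨x, hx, hxK⟩, _⟩ := (Finset.mem_filter.1 hK).2
          simp only [side, Finset.mem_filter, Finset.mem_univ, true_and] at hxK
          exact Sym2.mem_toFinset.2 (Sym2.mem_map.2 ⟨x, hx, hxK⟩)
      _ ≤ 2 := by rw [Sym2.card_toFinset]; split_ifs <;> norm_num
  calc numComponents ends F * c = ∑ _K : G.ConnectedComponent, c := by
        rw [Finset.sum_const, Finset.card_univ, smul_eq_mul, numComponents,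
          Nat.card_eq_fintype_card]
    _ ≤ ∑ K, (X.filter (crosses ends (side K))).card := Finset.sum_le_sum fun K _ => hcut K
    _ = ∑ e ∈ X, (Finset.univ.filter fun K => crosses ends (side K) e).card :=
        Finset.sum_card_bipartiteAbove_eq_sum_card_bipartiteBelow _
    _ ≤ ∑ _e ∈ X, 2 := Finset.sum_le_sum htwo
    _ = 2 * X.card := by rw [Finset.sum_const, smul_eq_mul, mul_comm]

lemma mul_sub_le_pivotalSum_of_le_cutValue {b r : ℕ}
    (hmin : ∀ A : Finset V, A.Nonempty → Aᶜ.Nonempty → 2 * b ≤ cutValue ends A) (hr : 2 ≤ r)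
    (F : Finset E) :
    (r * b : ℝ) * (atLeastComponents ends r F - atLeastComponents ends (r + 1) F)
      ≤ pivotalSum (atLeastComponents ends r) F := by
  rw [atLeastComponents_sub_succ, pivotalSum_atLeastComponents]
  split_ifs with hF
  · have hcross : crossingEdges ends F
        ⊆ F.filter fun e => numComponents ends (F.erase e) < r ∧ r ≤ numComponents ends F :=
      fun e he => by
        obtain ⟨heF, x, hx, y, hy, hxy⟩ := Finset.mem_filter.1 he
        exact Finset.mem_filter.2 ⟨heF, hF ▸ numComponents_erase_lt ends hx hy hxy, hF.ge⟩
    have hcount := numComponents_mul_le_two_mul_card_crossingEdges ends hmin (hF ▸ hr)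
    rw [hF] at hcount
    have : r * b ≤ (crossingEdges ends F).card := by linarith
    rw [mul_one]
    exact_mod_cast this.trans (Finset.card_le_card hcross)
  · rw [mul_zero]
    positivity

end MinCut

section Cycle

open Fin.NatCast Fin.CommRing

variable {m b : ℕ}

lemma cycleEnds_apply (e : Fin (m + 2) × Fin b) : cycleEnds (m + 2) b e = s(e.1, e.1 + 1) := by
  rw [cycleEnds, finRotate_apply]

noncomputable def failedBundles (F : Finset (Fin (m + 2) × Fin b)) : Finset (Fin (m + 2)) :=
  Finset.univ.filter fun i => ∀ j, (i, j) ∈ F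

lemma notMem_failedBundles {F : Finset (Fin (m + 2) × Fin b)} {i : Fin (m + 2)} :
    i ∉ failedBundles F ↔ ∃ j, (i, j) ∉ F := by
  simp [failedBundles]

lemma failedBundles_erase (F : Finset (Fin (m + 2) × Fin b)) (e : Fin (m + 2) × Fin b) :
    failedBundles (F.erase e) = (failedBundles F).erase e.1 := by
  ext i
  simp only [failedBundles, Finset.mem_filter, Finset.mem_univ, true_and, Finset.mem_erase]
  constructor
  · intro h
    exact ⟨fun hi => (h e.2).1 (by subst hi; rfl), fun j => (h j).2⟩
  · rintro ⟨hi, h⟩ j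
    exact ⟨fun he => hi (by rw [← he]), h j⟩

lemma survGraph_cycleEnds_adj {F : Finset (Fin (m + 2) × Fin b)} {v w : Fin (m + 2)} :
    (survGraph (cycleEnds (m + 2) b) F).Adj v w ↔
      (v ∉ failedBundles F ∧ w = v + 1) ∨ (w ∉ failedBundles F ∧ v = w + 1) := by
  rw [survGraph_adj]
  constructor
  · rintro ⟨-, e, he, hvw⟩
    rw [cycleEnds_apply, Sym2.eq_iff] at hvw
    rcases hvw with ⟨rfl, rfl⟩ | ⟨rfl, rfl⟩
    · exact Or.inl ⟨notMem_failedBundles.2 ⟨e.2, he⟩, rfl⟩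
    · exact Or.inr ⟨notMem_failedBundles.2 ⟨e.2, he⟩, rfl⟩
  · rintro (⟨hv, rfl⟩ | ⟨hw, rfl⟩)
    · obtain ⟨j, hj⟩ := notMem_failedBundles.1 hv
      exact ⟨by simp, (v, j), hj, cycleEnds_apply _⟩
    · obtain ⟨j, hj⟩ := notMem_failedBundles.1 hw
      exact ⟨by simp, (w, j), hj, by rw [cycleEnds_apply, Sym2.eq_swap]⟩

lemma reachable_add_of_forall_notMem {F : Finset (Fin (m + 2) × Fin b)} {v : Fin (m + 2)} {d : ℕ}
    (h : ∀ k < d, v + (k : Fin (m + 2)) ∉ failedBundles F) :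
    (survGraph (cycleEnds (m + 2) b) F).Reachable v (v + d) := by
  induction d with
  | zero => simp
  | succ d ih =>
    refine (ih fun k hk => h k (by omega)).trans ?_
    rw [Nat.cast_succ, ← add_assoc]
    exact (survGraph_cycleEnds_adj.2 (Or.inl ⟨h d (by omega), rfl⟩)).reachable

lemma exists_add_mem {S : Finset (Fin (m + 2))} (hS : S.Nonempty) (v : Fin (m + 2)) :
    ∃ d : ℕ, v + (d : Fin (m + 2)) ∈ S := by
  obtain ⟨s, hs⟩ := hS
  exact ⟨(s - v : Fin (m + 2)).val, by rwa [Fin.cast_val_eq_self, add_sub_cancel]⟩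

section NextMem

variable {S : Finset (Fin (m + 2))} (hS : S.Nonempty)

noncomputable def nextMem (v : Fin (m + 2)) : Fin (m + 2) :=
  v + (Nat.find (exists_add_mem hS v) : Fin (m + 2))

lemma nextMem_mem (v : Fin (m + 2)) : nextMem hS v ∈ S :=
  Nat.find_spec (exists_add_mem hS v)

lemma nextMem_of_mem {v : Fin (m + 2)} (hv : v ∈ S) : nextMem hS v = v := by
  have : Nat.find (exists_add_mem hS v) = 0 := Nat.find_eq_zero _ |>.2 (by simpa using hv)
  simp [nextMem, this]

lemma nextMem_add_one {v : Fin (m + 2)} (hv : v ∉ S) : nextMem hS (v + 1) = nextMem hS v := by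
  have hsucc : ∃ d : ℕ, v + ((d + 1 : ℕ) : Fin (m + 2)) ∈ S := by
    obtain ⟨d, hd⟩ := exists_add_mem hS (v + 1)
    exact ⟨d, by rwa [Nat.cast_succ, add_comm (d : Fin (m + 2)), ← add_assoc]⟩
  have hfind := Nat.find_comp_succ (exists_add_mem hS v) hsucc (by simpa using hv)
  rw [Nat.find_congr' (hp := hsucc) (hq := exists_add_mem hS (v + 1))
    (by intro d; rw [Nat.cast_succ, add_comm (d : Fin (m + 2)), ← add_assoc])] at hfind
  rw [nextMem, nextMem, hfind, Nat.cast_succ]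
  ring

end NextMem

lemma reachable_nextMem {F : Finset (Fin (m + 2) × Fin b)} (hS : (failedBundles F).Nonempty)
    (v : Fin (m + 2)) : (survGraph (cycleEnds (m + 2) b) F).Reachable v (nextMem hS v) :=
  reachable_add_of_forall_notMem fun _ hk => Nat.find_min (exists_add_mem hS v) hk

lemma numComponents_cycleEnds (F : Finset (Fin (m + 2) × Fin b)) :
    numComponents (cycleEnds (m + 2) b) F = max 1 (failedBundles F).card := by
  set G := survGraph (cycleEnds (m + 2) b) F
  rcases (failedBundles F).eq_empty_or_nonempty with hS | hS
  · have hconn : G.Preconnected := fun v w => by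
      have hreach : ∀ u, G.Reachable 0 u := fun u => by
        simpa using reachable_add_of_forall_notMem (F := F) (v := 0) (d := u.val) (by simp [hS])
      exact (hreach v).symm.trans (hreach w)
    have := hconn.subsingleton_connectedComponent
    rw [hS, Finset.card_empty, numComponents]
    exact Nat.card_eq_one_iff_unique.2 ⟨this, ⟨G.connectedComponentMk 0⟩⟩
  · -- `nextMem` is constant along surviving edges and fixes each failed bundle.
    have hconst : ∀ v w, G.Reachable v w → nextMem hS v = nextMem hS w := fun v w =>
      SimpleGraph.Reachable.eq_of_forall_adj _ fun v w hvw => by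
        rcases survGraph_cycleEnds_adj.1 hvw with ⟨hv, rfl⟩ | ⟨hw, rfl⟩
        exacts [(nextMem_add_one hS hv).symm, nextMem_add_one hS hw]
    have hbij : Function.Bijective fun i : failedBundles F => G.connectedComponentMk i := by
      refine ⟨fun i i' h => Subtype.ext ?_, fun K => ?_⟩
      · simpa [nextMem_of_mem hS i.2, nextMem_of_mem hS i'.2] using
          hconst _ _ (SimpleGraph.ConnectedComponent.eq.1 h)
      · obtain ⟨v, rfl⟩ : ∃ v, G.connectedComponentMk v = K := K.exists_rep
        exact ⟨⟨nextMem hS v, nextMem_mem hS v⟩,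
          SimpleGraph.ConnectedComponent.eq.2 (reachable_nextMem hS v).symm⟩
    rw [max_eq_right (Finset.card_pos.2 hS), numComponents, ← Nat.card_eq_of_bijective _ hbij,
      Nat.card_eq_finsetCard]

lemma pivotalSum_cycleEnds_le {r : ℕ} (hr : 2 ≤ r) (F : Finset (Fin (m + 2) × Fin b)) :
    pivotalSum (atLeastComponents (cycleEnds (m + 2) b) r) F
      ≤ (r * b : ℝ) * (atLeastComponents (cycleEnds (m + 2) b) r F
          - atLeastComponents (cycleEnds (m + 2) b) (r + 1) F) := by
  rw [atLeastComponents_sub_succ, pivotalSum_atLeastComponents]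
  have herase : ∀ e, numComponents (cycleEnds (m + 2) b) (F.erase e)
      = max 1 ((failedBundles F).erase e.1).card := fun e => by
    rw [numComponents_cycleEnds, failedBundles_erase]
  rw [numComponents_cycleEnds]
  split_ifs with hF
  · have hS : (failedBundles F).card = r := by omega
    have hsub : F.filter (fun e => numComponents (cycleEnds (m + 2) b) (F.erase e) < r
        ∧ r ≤ max 1 (failedBundles F).card) ⊆ failedBundles F ×ˢ Finset.univ := by
      intro e he
      have hlt := (Finset.mem_filter.1 he).2.1
      refine Finset.mem_product.2 ⟨by_contra fun h => ?_, Finset.mem_univ _⟩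
      rw [herase, Finset.erase_eq_of_notMem h] at hlt
      omega
    calc ((F.filter _).card : ℝ) ≤ (failedBundles F ×ˢ (Finset.univ : Finset (Fin b))).card := by
          exact_mod_cast Finset.card_le_card hsub
      _ = r * b * 1 := by
          rw [Finset.card_product, Finset.card_univ, Fintype.card_fin, hS]; push_cast; ring
  · rw [mul_zero, Finset.filter_false_of_mem, Finset.card_empty, Nat.cast_zero]
    rintro e - ⟨hlt, hle⟩
    have := Finset.pred_card_le_card_erase (s := failedBundles F) (a := e.1)
    rw [herase] at hlt
    omega

end Cycle

section Comparison

variable {V E : Type} [Fintype V] [DecidableEq V] [Fintype E] [DecidableEq E]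
  (ends : E → Sym2 V)

theorem bernoulliExpect_atLeastComponents_le_cycleEnds {b n : ℕ}
    (hmin : ∀ A : Finset V, A.Nonempty → Aᶜ.Nonempty → 2 * b ≤ cutValue ends A)
    (hn : 2 ≤ n) (hV : Fintype.card V = n) (r : ℕ) {p : ℝ} (hp : p ∈ Set.Icc (0 : ℝ) 1) :
    bernoulliExpect p (atLeastComponents ends r)
      ≤ bernoulliExpect p (atLeastComponents (cycleEnds n b) r) := by
  obtain ⟨m, rfl⟩ : ∃ m, n = m + 2 := ⟨n - 2, by omega⟩
  have : Nonempty V := Fintype.card_pos_iff.1 (by omega)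
  have hcard : Nat.card (Fin (m + 2)) = Nat.card V := by simp [hV]
  set UG := fun r q => bernoulliExpect q (atLeastComponents ends r)
  set UC := fun r q => bernoulliExpect q (atLeastComponents (cycleEnds (m + 2) b) r)
  suffices h : ∀ r, ∀ p ∈ Set.Icc (0 : ℝ) 1, UG r p ≤ UC r p from h r p hp
  refine Nat.strong_decreasing_induction ⟨m + 2, fun r hr p _ => ?_⟩ fun r ih p hp => ?_
  · have hr' : Nat.card V < r := by simp [Nat.card_eq_fintype_card, hV, hr]
    simp only [UG, UC]
    rw [atLeastComponents_of_card_lt ends hr', atLeastComponents_of_card_lt _ (hcard ▸ hr'),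
      bernoulliExpect_const, bernoulliExpect_const]
  rcases le_or_gt r 1 with hr | hr
  · simp only [UG, UC]
    rw [atLeastComponents_of_le_one ends hr, atLeastComponents_of_le_one _ hr,
      bernoulliExpect_const, bernoulliExpect_const]
  have hD : ∀ x ∈ Set.Ioc (0 : ℝ) 1, x * deriv (fun q => UC r q - UG r q) x
      ≤ (r * b : ℝ) * (UC r x - UG r x) := by
    intro x hx
    have hx' : x ∈ Set.Icc (0 : ℝ) 1 := Set.Ioc_subset_Icc_self hx
    have hC : x * deriv (UC r) x ≤ (r * b : ℝ) * (UC r x - UC (r + 1) x) := by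
      rw [mul_deriv_bernoulliExpect, ← bernoulliExpect_const_mul_sub]
      exact bernoulliExpect_mono hx' (pivotalSum_cycleEnds_le hr)
    have hG : (r * b : ℝ) * (UG r x - UG (r + 1) x) ≤ x * deriv (UG r) x := by
      rw [mul_deriv_bernoulliExpect, ← bernoulliExpect_const_mul_sub]
      exact bernoulliExpect_mono hx' (mul_sub_le_pivotalSum_of_le_cutValue ends hmin hr)
    have hnext := mul_nonneg (by positivity : (0 : ℝ) ≤ r * b)
      (sub_nonneg.2 (ih (r + 1) (Nat.lt_succ_self r) x hx'))
    rw [deriv_fun_sub (differentiable_bernoulliExpect _ x) (differentiable_bernoulliExpect _ x),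
      mul_sub]
    linarith
  have h1 : 0 ≤ UC r 1 - UG r 1 := by
    simp only [UC, UG, bernoulliExpect_one, atLeastComponents, numComponents_univ, hcard,
      sub_self, le_refl]
  have := nonneg_of_mul_deriv_le (D := fun q => UC r q - UG r q)
    ((differentiable_bernoulliExpect _).sub (differentiable_bernoulliExpect _)) h1 hD p hp
  linarith

end Comparison

theorem stmt12_general {V E : Type} [Fintype V] [DecidableEq V] [Fintype E]
    (ends : E → Sym2 V)
    (hn : 2 ≤ Fintype.card V)
    (c : ℕ) (hceven : Even c)
    (hmin : ∀ A : Finset V, A.Nonempty → Aᶜ.Nonempty → c ≤ cutValue ends A)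
    (p : ℝ) (hp0 : 0 ≤ p) (hp1 : p ≤ 1) (r : ℤ) :
    failurePr p (Finset.univ.filter
        (fun F : Finset E => r ≤ (numComponents ends F : ℤ)))
      ≤ failurePr p (Finset.univ.filter
          (fun F : Finset (Fin (Fintype.card V) × Fin (c / 2)) =>
            r ≤ (numComponents (cycleEnds (Fintype.card V) (c / 2)) F : ℤ))) := by
  rw [failurePr_eq_bernoulliExpect_atLeastComponents,
    failurePr_eq_bernoulliExpect_atLeastComponents]
  refine bernoulliExpect_atLeastComponents_le_cycleEnds ends (fun A hA hAc => ?_) hn rfl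
    r.toNat ⟨hp0, hp1⟩
  rw [Nat.two_mul_div_two_of_even hceven]
  exact hmin A hA hAc

/-- Let `G` be a connected multigraph on `n ≥ 2` vertices with even minimum
cut value `c`, and let `Cₙ` be the cycle on `n` vertices with `c/2` parallel edges between
consecutive vertices.  If in each graph every edge fails independently with probability
`p ∈ [0,1]`, then for every integer `r` the probability that the surviving subgraph of `G` has
`r` or more connected components is at most the corresponding probability for `Cₙ`. -/
theorem stmt12 {V E : Type} [Fintype V] [DecidableEq V] [Fintype E]
    (ends : E → Sym2 V) (hnd : ∀ e, ¬ (ends e).IsDiag)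
    (hn : 2 ≤ Fintype.card V)
    (hconn : (survGraph ends (∅ : Finset E)).Connected)
    (c : ℕ) (hceven : Even c)
    (hmin : ∀ A : Finset V, A.Nonempty → Aᶜ.Nonempty → c ≤ cutValue ends A)
    (hex : ∃ A : Finset V, A.Nonempty ∧ Aᶜ.Nonempty ∧ cutValue ends A = c)
    (p : ℝ) (hp0 : 0 ≤ p) (hp1 : p ≤ 1) (r : ℤ) :
    failurePr p (Finset.univ.filter
        (fun F : Finset E => r ≤ (numComponents ends F : ℤ)))
      ≤ failurePr p (Finset.univ.filter
          (fun F : Finset (Fin (Fintype.card V) × Fin (c / 2)) =>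
            r ≤ (numComponents (cycleEnds (Fintype.card V) (c / 2)) F : ℤ))) :=
  stmt12_general ends hn c hceven hmin p hp0 hp1 r
end

section
/- Let F_1, …, F_N be events in a probability space and let k ≥ 2 be an integer. For each integer u ≥ 1 let S_u denote the event that at least u of the events F_1, …, F_N occur. Then Pr[F_1 ∪ ⋯ ∪ F_N] = ∑_{j=1}^{k−1} (−1)^{j−1} ∑_{I ⊆ {1,…,N}, |I| = j} Pr[⋂_{i ∈ I} F_i] + (−1)^{k−1} ∑_{u=k}^{N} C(u−2, k−2) · Pr[S_u], where C(a, b) denotes the binomial coefficient (with C(a, b) = 0 when a < b). -/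
open scoped Classical

open Finset MeasureTheory


private lemma altSum (m r : ℕ) (hm : 1 ≤ m) :
    ∑ j ∈ Finset.range (r + 1), (-1 : ℝ) ^ j * (m.choose j : ℝ)
      = (-1 : ℝ) ^ r * ((m - 1).choose r : ℝ) := by
  obtain ⟨n, rfl⟩ : ∃ n, m = n + 1 := ⟨m - 1, (Nat.succ_pred_eq_of_pos hm).symm⟩
  induction r with
  | zero => simp
  | succ r ih =>
    rw [Finset.sum_range_succ, ih]
    simp only [Nat.add_sub_cancel]
    rw [Nat.choose_succ_succ]
    push_cast
    ring

private lemma hockey (k : ℕ) (hk : 2 ≤ k) (m : ℕ) :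
    ∑ u ∈ Finset.Icc k m, ((u - 2).choose (k - 2)) = (m - 1).choose (k - 1) := by
  induction m with
  | zero =>
    rw [Finset.Icc_eq_empty (by omega)]
    simp only [Finset.sum_empty, Nat.zero_sub]
    exact (Nat.choose_eq_zero_of_lt (by omega)).symm
  | succ m ih =>
    by_cases h : k ≤ m + 1
    · rw [Finset.sum_Icc_succ_top h, ih]
      obtain ⟨a, rfl⟩ : ∃ a, k = a + 2 := ⟨k - 2, by omega⟩
      obtain ⟨b, rfl⟩ : ∃ b, m = b + 1 := ⟨m - 1, by omega⟩
      simp only [show b + 1 + 1 - 2 = b by omega, show b + 1 + 1 - 1 = b + 1 by omega,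
        show a + 2 - 1 = a + 1 by omega, show a + 2 - 2 = a by omega,
        show b + 1 - 1 = b by omega]
      rw [Nat.choose_succ_succ b a]
      exact Nat.add_comm _ _
    · rw [Finset.Icc_eq_empty (by omega)]
      exact (Nat.choose_eq_zero_of_lt (by omega)).symm

private lemma coeff (k m : ℕ) (hk : 2 ≤ k) :
    (if 0 < m then (1 : ℝ) else 0)
      = (∑ j ∈ Finset.Icc 1 (k - 1), (-1 : ℝ) ^ (j - 1) * (m.choose j : ℝ))
        + (-1 : ℝ) ^ (k - 1) * ((m - 1).choose (k - 1) : ℝ) := by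
  rcases Nat.eq_zero_or_pos m with rfl | hm
  · rw [if_neg (lt_irrefl 0)]
    rw [Finset.sum_eq_zero fun j hj => by
      rw [Nat.choose_eq_zero_of_lt (by simp only [Finset.mem_Icc] at hj; omega)]; simp]
    rw [Nat.zero_sub, Nat.choose_eq_zero_of_lt (by omega)]
    simp
  · have hrange : Finset.range k = insert 0 (Finset.Icc 1 (k - 1)) := by
      ext j
      simp only [Finset.mem_range, Finset.mem_insert, Finset.mem_Icc]
      omega
    have h0 : (0 : ℕ) ∉ Finset.Icc 1 (k - 1) := by simp
    have hA := altSum m (k - 1) hm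
    rw [show k - 1 + 1 = k by omega, hrange, Finset.sum_insert h0] at hA
    simp only [pow_zero, Nat.choose_zero_right, Nat.cast_one, one_mul] at hA
    rw [if_pos hm]
    have hsgn : ∀ j ∈ Finset.Icc 1 (k - 1), (-1 : ℝ) ^ (j - 1) * (m.choose j : ℝ)
        = -((-1 : ℝ) ^ j * (m.choose j : ℝ)) := by
      intro j hj
      have hj1 : 1 ≤ j := (Finset.mem_Icc.mp hj).1
      have he : (-1 : ℝ) ^ j = (-1) ^ (j - 1) * (-1) ^ 1 := by
        rw [← pow_add]; congr 1; omega
      rw [he]; ring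
    rw [Finset.sum_congr rfl hsgn, Finset.sum_neg_distrib]
    linarith [hA]

private lemma hAmeas {Ω : Type} [MeasurableSpace Ω]
    (N : ℕ) (F : Fin N → Set Ω) (hF : ∀ i, MeasurableSet (F i)) (T : Finset (Fin N)) :
    MeasurableSet {ω | (Finset.univ.filter (fun i => ω ∈ F i)) = T} := by
  have he : {ω | (Finset.univ.filter (fun i => ω ∈ F i)) = T}
      = (⋂ i ∈ T, F i) ∩ (⋂ i ∈ Tᶜ, (F i)ᶜ) := by
    ext ω
    simp only [Set.mem_setOf_eq, Finset.ext_iff, Finset.mem_filter, Finset.mem_univ,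
      true_and, Set.mem_inter_iff, Set.mem_iInter, Finset.mem_compl, Set.mem_compl_iff]
    constructor
    · intro h
      exact ⟨fun i hi => (h i).mpr hi, fun i hi hF' => hi ((h i).mp hF')⟩
    · intro h i
      exact ⟨fun hF' => by_contra fun hi => h.2 i hi hF', h.1 i⟩
  rw [he]
  exact (MeasurableSet.biInter (Set.to_countable _) fun i _ => hF i).inter
    (MeasurableSet.biInter (Set.to_countable _) fun i _ => (hF i).compl)

private lemma hval {Ω : Type} [MeasurableSpace Ω] (μ : MeasureTheory.Measure Ω)
    [MeasureTheory.IsProbabilityMeasure μ]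
    (N : ℕ) (F : Fin N → Set Ω) (hF : ∀ i, MeasurableSet (F i))
    (P : Finset (Fin N) → Prop) [DecidablePred P] :
    (μ {ω | P (Finset.univ.filter (fun i => ω ∈ F i))}).toReal
      = ∑ T ∈ Finset.univ.filter P,
          (μ {ω | (Finset.univ.filter (fun i => ω ∈ F i)) = T}).toReal := by
  have hU : {ω | P (Finset.univ.filter (fun i => ω ∈ F i))}
      = ⋃ T ∈ Finset.univ.filter P, {ω | (Finset.univ.filter (fun i => ω ∈ F i)) = T} := by
    ext ω
    simp only [Set.mem_setOf_eq, Set.mem_iUnion, Finset.mem_filter, Finset.mem_univ,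
      true_and, exists_prop]
    exact ⟨fun h => ⟨_, h, rfl⟩, fun ⟨T, hT, e⟩ => e ▸ hT⟩
  have hdisj : Set.PairwiseDisjoint (↑(Finset.univ.filter P))
      (fun T => {ω | (Finset.univ.filter (fun i => ω ∈ F i)) = T}) := by
    intro T _ T' _ hne
    exact Set.disjoint_left.mpr fun ω h1 h2 => hne (h1.symm.trans h2)
  rw [hU, measure_biUnion_finset hdisj (fun T _ => hAmeas N F hF T),
    ENNReal.toReal_sum (fun T _ => measure_ne_top μ _)]

/-- Let `F₁, …, F_N` be events in a probability space and `k ≥ 2` an integer.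
For `u ≥ 1` let `S_u` be the event that at least `u` of the events occur.  Then the
inclusion–exclusion expansion of `Pr[F₁ ∪ ⋯ ∪ F_N]` truncated before the `k`-th term has error
`(-1)^(k-1) ∑_{u=k}^{N} C(u-2, k-2) Pr[S_u]`:
`Pr[⋃ Fᵢ] = ∑_{j=1}^{k-1} (-1)^(j-1) ∑_{|I|=j} Pr[⋂_{i∈I} Fᵢ]
            + (-1)^(k-1) ∑_{u=k}^{N} C(u-2, k-2) Pr[S_u]`. -/
theorem stmt14 {Ω : Type} [MeasurableSpace Ω] (μ : MeasureTheory.Measure Ω)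
    [MeasureTheory.IsProbabilityMeasure μ]
    (N : ℕ) (F : Fin N → Set Ω) (hF : ∀ i, MeasurableSet (F i))
    (k : ℕ) (hk : 2 ≤ k) :
    (μ (⋃ i, F i)).toReal
      = (∑ j ∈ Finset.Icc 1 (k - 1), (-1 : ℝ) ^ (j - 1) *
            ∑ I ∈ Finset.powersetCard j (Finset.univ : Finset (Fin N)),
              (μ (⋂ i ∈ I, F i)).toReal)
        + (-1 : ℝ) ^ (k - 1) *
            ∑ u ∈ Finset.Icc k N,
              ((u - 2).choose (k - 2) : ℝ) *
                (μ {ω : Ω | u ≤ (Finset.univ.filter (fun i => ω ∈ F i)).card}).toReal := by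
  set p : Finset (Fin N) → ℝ :=
    fun T => (μ {ω | (Finset.univ.filter (fun i => ω ∈ F i)) = T}).toReal with hp
  have h1 : (μ (⋃ i, F i)).toReal
      = ∑ T ∈ Finset.univ.filter (fun T : Finset (Fin N) => T.Nonempty), p T := by
    have he : (⋃ i, F i) = {ω | (Finset.univ.filter (fun i => ω ∈ F i)).Nonempty} := by
      ext ω
      simp [Finset.filter_nonempty_iff]
    rw [he]
    exact hval μ N F hF _
  have h2 : ∀ I : Finset (Fin N), (μ (⋂ i ∈ I, F i)).toReal
      = ∑ T ∈ Finset.univ.filter (fun T => I ⊆ T), p T := by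
    intro I
    have he : (⋂ i ∈ I, F i) = {ω | I ⊆ (Finset.univ.filter (fun i => ω ∈ F i))} := by
      ext ω
      simp [Finset.subset_iff]
    rw [he]
    exact hval μ N F hF _
  have h3 : ∀ u : ℕ,
      (μ {ω : Ω | u ≤ (Finset.univ.filter (fun i => ω ∈ F i)).card}).toReal
      = ∑ T ∈ Finset.univ.filter (fun T : Finset (Fin N) => u ≤ T.card), p T := by
    intro u
    exact hval μ N F hF (fun T : Finset (Fin N) => u ≤ T.card)
  rw [h1]
  simp only [h2, h3, Finset.sum_filter]
  have hIsum : ∀ j : ℕ,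
      ∑ I ∈ Finset.powersetCard j (Finset.univ : Finset (Fin N)),
        ∑ T ∈ (Finset.univ : Finset (Finset (Fin N))), ite (I ⊆ T) (p T) 0
      = ∑ T ∈ (Finset.univ : Finset (Finset (Fin N))), (T.card.choose j : ℝ) * p T := by
    intro j
    rw [Finset.sum_comm]
    refine Finset.sum_congr rfl fun T _ => ?_
    rw [← Finset.sum_filter]
    have hf : (Finset.powersetCard j (Finset.univ : Finset (Fin N))).filter (fun I => I ⊆ T)
        = Finset.powersetCard j T := by
      ext I
      simp only [Finset.mem_filter, Finset.mem_powersetCard, Finset.subset_univ, true_and]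
      tauto
    rw [hf, Finset.sum_const, Finset.card_powersetCard, nsmul_eq_mul]
  have hUsum : ∑ u ∈ Finset.Icc k N, ((u - 2).choose (k - 2) : ℝ) *
        ∑ T ∈ (Finset.univ : Finset (Finset (Fin N))), ite (u ≤ T.card) (p T) 0
      = ∑ T ∈ (Finset.univ : Finset (Finset (Fin N))),
          ((T.card - 1).choose (k - 1) : ℝ) * p T := by
    simp only [Finset.mul_sum]
    rw [Finset.sum_comm]
    refine Finset.sum_congr rfl fun T _ => ?_
    have hTc : T.card ≤ N := by simpa using Finset.card_le_univ T
    have hsplit : ∀ u ∈ Finset.Icc k N,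
        ((u - 2).choose (k - 2) : ℝ) * ite (u ≤ T.card) (p T) 0
        = ite (u ≤ T.card) (((u - 2).choose (k - 2) : ℝ) * p T) 0 := by
      intro u _; split <;> simp
    rw [Finset.sum_congr rfl hsplit, ← Finset.sum_filter]
    have hf : (Finset.Icc k N).filter (fun u => u ≤ T.card) = Finset.Icc k T.card := by
      ext u
      simp only [Finset.mem_filter, Finset.mem_Icc]
      omega
    rw [hf, ← Finset.sum_mul, ← Nat.cast_sum, hockey k hk T.card]
  have step1 : ∀ j ∈ Finset.Icc 1 (k - 1),
      (-1 : ℝ) ^ (j - 1) * ∑ I ∈ Finset.powersetCard j (Finset.univ : Finset (Fin N)),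
          ∑ T ∈ (Finset.univ : Finset (Finset (Fin N))), ite (I ⊆ T) (p T) 0
      = ∑ T ∈ (Finset.univ : Finset (Finset (Fin N))),
          (-1 : ℝ) ^ (j - 1) * ((T.card.choose j : ℝ) * p T) := by
    intro j _
    rw [hIsum j, Finset.mul_sum]
  rw [Finset.sum_congr rfl step1, Finset.sum_comm, hUsum, Finset.mul_sum,
    ← Finset.sum_add_distrib]
  refine Finset.sum_congr rfl fun T _ => ?_
  calc ite T.Nonempty (p T) 0
      = (if 0 < T.card then (1 : ℝ) else 0) * p T := by
        by_cases h : T.Nonempty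
        · rw [if_pos h, if_pos (Finset.card_pos.mpr h), one_mul]
        · rw [if_neg h, if_neg (fun hc => h (Finset.card_pos.mp hc)), zero_mul]
    _ = ((∑ j ∈ Finset.Icc 1 (k - 1), (-1 : ℝ) ^ (j - 1) * (T.card.choose j : ℝ))
          + (-1 : ℝ) ^ (k - 1) * ((T.card - 1).choose (k - 1) : ℝ)) * p T := by
        rw [coeff k T.card hk]
    _ = _ := by rw [add_mul, Finset.sum_mul]; simp only [mul_assoc]
end

section
/- Let G = (V, E) be a multigraph and let F ⊆ E be a set of edges such that the graph (V, E∖F) has exactly k connected components. Then the number of distinct cuts of G whose edge sets are entirely contained in F is at most 2^{k−1} − 1. Consequently, if the edge sets of u distinct cuts of G are all contained in F, then (V, E∖F) has at least ⌈log₂(u+1) + 1⌉ connected components. -/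
/-!
A cut whose edges all lie in `F` is crossed by no surviving edge, so each of its sides is a
union of connected components of `(V, E ∖ F)`. Choosing the side that avoids a fixed vertex `v₀`,
a cut is determined by a nonempty set of components not containing the component of `v₀`; there
are `2^(k-1) - 1` such sets. The logarithmic bound is this inequality solved for `k`.
-/

open scoped Classical

open Finset

namespace SimpleGraph

variable {V : Type} {G : SimpleGraph V}

lemma Reachable.mem_iff_of_adj_closed {S : Set V} (hS : ∀ x y, G.Adj x y → x ∈ S → y ∈ S)
    {x y : V} (h : G.Reachable x y) : x ∈ S ↔ y ∈ S := by
  suffices ∀ {x y}, G.Reachable x y → x ∈ S → y ∈ S from ⟨this h, this h.symm⟩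
  rintro x y ⟨p⟩ hx
  by_contra hy
  obtain ⟨d, -, hd, hd'⟩ := p.exists_boundary_dart S hx hy
  exact hd' (hS _ _ d.adj hd)

variable [Fintype V]

noncomputable def componentUnion (G : SimpleGraph V) (T : Finset G.ConnectedComponent) :
    Finset V :=
  univ.filter fun v => G.connectedComponentMk v ∈ T

lemma eq_componentUnion_image {A : Finset V}
    (hA : ∀ x y, G.Reachable x y → x ∈ A → y ∈ A) :
    A = G.componentUnion (A.image G.connectedComponentMk) := by
  ext v
  simp only [componentUnion, mem_filter, mem_univ, true_and, mem_image]
  exact ⟨fun hv => ⟨v, hv, rfl⟩, fun ⟨a, ha, hav⟩ => hA a v (ConnectedComponent.eq.1 hav) ha⟩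

lemma card_image_pair_le_of_reachable_closed [DecidableEq V] [Nonempty V]
    (S : Finset (Finset V))
    (hS : ∀ A ∈ S, A.Nonempty ∧ Aᶜ.Nonempty ∧ ∀ x y, G.Reachable x y → x ∈ A → y ∈ A) :
    (S.image fun A => ({A, Aᶜ} : Finset (Finset V))).card
      ≤ 2 ^ (Nat.card G.ConnectedComponent - 1) - 1 := by
  obtain ⟨v₀⟩ := ‹Nonempty V›
  set pairOf := fun T : Finset G.ConnectedComponent =>
    ({G.componentUnion T, (G.componentUnion T)ᶜ} : Finset (Finset V))
  set 𝒯 := ((univ.erase (G.connectedComponentMk v₀)).powerset.erase ∅)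
  have hsub : S.image (fun A => ({A, Aᶜ} : Finset (Finset V))) ⊆ 𝒯.image pairOf := by
    intro P hP
    obtain ⟨A, hA, rfl⟩ := mem_image.1 hP
    obtain ⟨hAne, hAcne, hAclosed⟩ := hS A hA
    have hAcclosed : ∀ x y, G.Reachable x y → x ∈ Aᶜ → y ∈ Aᶜ := fun x y hxy hx =>
      mem_compl.2 fun hy => mem_compl.1 hx (hAclosed y x hxy.symm hy)
    obtain ⟨B, hBne, hBclosed, hv₀B, hBA⟩ : ∃ B : Finset V, B.Nonempty ∧
        (∀ x y, G.Reachable x y → x ∈ B → y ∈ B) ∧ v₀ ∉ B ∧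
        ({B, Bᶜ} : Finset (Finset V)) = {A, Aᶜ} := by
      by_cases hv₀ : v₀ ∈ A
      · exact ⟨Aᶜ, hAcne, hAcclosed, notMem_compl.2 hv₀, by rw [compl_compl, pair_comm]⟩
      · exact ⟨A, hAne, hAclosed, hv₀, rfl⟩
    refine mem_image.2 ⟨B.image G.connectedComponentMk, ?_, ?_⟩
    · refine mem_erase.2 ⟨(hBne.image _).ne_empty, mem_powerset.2 fun c hc => ?_⟩
      obtain ⟨b, hb, rfl⟩ := mem_image.1 hc
      refine mem_erase.2 ⟨fun hbv₀ => hv₀B ?_, mem_univ _⟩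
      exact hBclosed b v₀ (ConnectedComponent.eq.1 hbv₀) hb
    · simp only [pairOf, ← eq_componentUnion_image hBclosed, hBA]
  calc _ ≤ (𝒯.image pairOf).card := card_le_card hsub
    _ ≤ 𝒯.card := card_image_le
    _ = _ := by
      rw [card_erase_of_mem (empty_mem_powerset _), card_powerset,
        card_erase_of_mem (mem_univ _), card_univ, Nat.card_eq_fintype_card]

end SimpleGraph

lemma numComponents_pos {V E : Type} [Finite V] [Nonempty V] (ends : E → Sym2 V)
    (F : Finset E) :
    0 < numComponents ends F :=
  Nat.card_pos

section Multigraph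

variable {V E : Type} [Fintype E] {ends : E → Sym2 V} {F : Finset E} {A : Finset V}

lemma mem_of_survGraph_adj (hA : cutEdges ends A ⊆ F) {x y : V}
    (hxy : (survGraph ends F).Adj x y) (hx : x ∈ A) : y ∈ A := by
  by_contra hy
  obtain ⟨-, ⟨e, heF, he⟩ | ⟨e, heF, he⟩⟩ := (SimpleGraph.fromRel_adj _ _ _).1 hxy <;>
    exact heF (hA (mem_filter.2 ⟨mem_univ _, ⟨x, by simp [he], hx⟩, ⟨y, by simp [he], hy⟩⟩))

lemma reachable_closed_of_cutEdges_subset (hA : cutEdges ends A ⊆ F) :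
    ∀ x y, (survGraph ends F).Reachable x y → x ∈ A → y ∈ A := fun _ _ h =>
  (h.mem_iff_of_adj_closed (S := (A : Set V)) fun _ _ => mem_of_survGraph_adj hA).1

variable [Fintype V] [DecidableEq V]

noncomputable def cutPartitionsWithin (ends : E → Sym2 V) (F : Finset E) :
    Finset (Finset (Finset V)) :=
  (univ.filter fun A : Finset V => A.Nonempty ∧ Aᶜ.Nonempty ∧ cutEdges ends A ⊆ F).image
    fun A => {A, Aᶜ}

lemma card_cutPartitionsWithin_le [Nonempty V] (ends : E → Sym2 V) (F : Finset E) :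
    (cutPartitionsWithin ends F).card ≤ 2 ^ (numComponents ends F - 1) - 1 :=
  SimpleGraph.card_image_pair_le_of_reachable_closed _ fun A hA => by
    obtain ⟨-, hne, hcne, hcut⟩ := mem_filter.1 hA
    exact ⟨hne, hcne, reachable_closed_of_cutEdges_subset hcut⟩

end Multigraph

lemma ceil_logb_two_add_one_le {u k : ℕ} (hk : 0 < k) (hu : u ≤ 2 ^ (k - 1) - 1) :
    ⌈Real.logb 2 ((u : ℝ) + 1) + 1⌉ ≤ (k : ℤ) := by
  have hpow : (u : ℝ) + 1 ≤ 2 ^ (k - 1) := by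
    have hone := Nat.one_le_two_pow (n := k - 1)
    exact_mod_cast (by omega : u + 1 ≤ 2 ^ (k - 1))
  have hlog : Real.logb 2 ((u : ℝ) + 1) ≤ ((k - 1 : ℕ) : ℝ) := by
    rwa [Real.logb_le_iff_le_rpow one_lt_two (by positivity), Real.rpow_natCast]
  rw [Int.ceil_le]
  push_cast [Nat.cast_sub hk] at hlog ⊢
  linarith

theorem stmt15_general {V E : Type} [Fintype V] [DecidableEq V] [Fintype E] [Nonempty V]
    (ends : E → Sym2 V)
    (F : Finset E) (k : ℕ) (hk : numComponents ends F = k) :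
    (((Finset.univ.filter (fun A : Finset V =>
          A.Nonempty ∧ Aᶜ.Nonempty ∧ cutEdges ends A ⊆ F)).image
            (fun A => ({A, Aᶜ} : Finset (Finset V)))).card ≤ 2 ^ (k - 1) - 1) ∧
      ∀ u : ℕ,
        u ≤ ((Finset.univ.filter (fun A : Finset V =>
            A.Nonempty ∧ Aᶜ.Nonempty ∧ cutEdges ends A ⊆ F)).image
              (fun A => ({A, Aᶜ} : Finset (Finset V)))).card →
          (⌈Real.logb 2 ((u : ℝ) + 1) + 1⌉ : ℤ) ≤ (numComponents ends F : ℤ) := by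
  subst hk
  have hbound := card_cutPartitionsWithin_le ends F
  exact ⟨hbound, fun u hu =>
    ceil_logb_two_add_one_le (numComponents_pos ends F) (hu.trans hbound)⟩

/-- Let `G = (V, E)` be a multigraph (with `V` nonempty) and `F ⊆ E` a set of
edges such that `(V, E ∖ F)` has exactly `k` connected components.  Then the number of distinct
cuts of `G` whose edge sets are contained in `F` is at most `2^(k-1) - 1`; consequently, if the
edge sets of `u` distinct cuts of `G` are all contained in `F`, then `(V, E ∖ F)` has at least
`⌈log₂(u+1) + 1⌉` connected components. -/
theorem stmt15 {V E : Type} [Fintype V] [DecidableEq V] [Fintype E] [Nonempty V]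
    (ends : E → Sym2 V) (hnd : ∀ e, ¬ (ends e).IsDiag)
    (F : Finset E) (k : ℕ) (hk : numComponents ends F = k) :
    (((Finset.univ.filter (fun A : Finset V =>
          A.Nonempty ∧ Aᶜ.Nonempty ∧ cutEdges ends A ⊆ F)).image
            (fun A => ({A, Aᶜ} : Finset (Finset V)))).card ≤ 2 ^ (k - 1) - 1) ∧
      ∀ u : ℕ,
        u ≤ ((Finset.univ.filter (fun A : Finset V =>
            A.Nonempty ∧ Aᶜ.Nonempty ∧ cutEdges ends A ⊆ F)).image
              (fun A => ({A, Aᶜ} : Finset (Finset V)))).card →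
          (⌈Real.logb 2 ((u : ℝ) + 1) + 1⌉ : ℤ) ≤ (numComponents ends F : ℤ) :=
  stmt15_general ends F k hk
end

section
/- Let D be an Eulerian directed multigraph on n ≥ 2 vertices (every vertex has in-degree equal to out-degree) whose minimum directed cut value c is at least 1, and let α ≥ 1 be a real number. Then the number of nonempty proper vertex subsets A whose directed cut has value at most α·c is less than 2n^{2α}. -/
open scoped Classical

/-- A directed multigraph on vertex type `V` is given by an edge-index type `E` together with a
map `D : E → V × V` assigning to each edge its tail and head (parallel edges allowed).  For a
vertex set `A`, `dirCutValue D A` is the value of the directed cut of `A`: the number of edges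
with tail in `A` and head outside `A`. -/
noncomputable def dirCutValue {V E : Type} [Fintype E] [DecidableEq V]
    (D : E → V × V) (A : Finset V) : ℕ :=
  (Finset.univ.filter (fun e => (D e).1 ∈ A ∧ (D e).2 ∉ A)).card

/-!
Karger's contraction argument, run with loops kept. Put `t = 2α`. As `D` is Eulerian, a cut `A`
with `d(A) ≤ α c` separates `d(A) + d(Aᶜ) ≤ t c` of the `m ≥ n c` non-loop edges (every out-degree
is at least `c`). Contracting a non-loop edge keeps the graph Eulerian with all cuts at least `c`,
and the small cuts not separating that edge are small cuts of the contraction; double counting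
pairs (small cut, unseparated edge) gives `N(n) ≤ n / (n - t) · N(n - 1)`. Starting from
`2 ^ r - 2` at `n = r = ⌈t⌉`, the product `∏_{i=r+1}^n i / (i - t)` is at most `n ^ t / r!`: it is
log-convex in `t`, and at `t = r - 1` and `t = r` it is a ratio of falling factorials, at most
`n ^ (r - 1) / r!` and `n ^ r / r!`. Finally `2 ^ r - 2 < 2 · r!`.
-/

open Finset

lemma prod_Ioc_div_sub_natCast {a r n : ℕ} (har : a ≤ r) (hrn : r ≤ n) :
    ∏ i ∈ Ioc r n, (i : ℝ) / (i - a) = n.descFactorial a / r.descFactorial a := by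
  have hpos : (0 : ℝ) < r.descFactorial a := by
    exact_mod_cast Nat.pos_of_ne_zero (by rw [Ne, Nat.descFactorial_eq_zero_iff_lt]; omega)
  induction n, hrn using Nat.le_induction with
  | base => simp [hpos.ne']
  | succ n hrn ih =>
    have hrec : ((n : ℝ) + 1 - a) * (n + 1).descFactorial a = (n + 1) * n.descFactorial a := by
      have := Nat.succ_descFactorial n a
      rw [← Nat.cast_inj (R := ℝ), Nat.cast_mul, Nat.cast_sub (by omega)] at this
      push_cast at this
      exact this
    have hna : (0 : ℝ) < (n : ℝ) + 1 - a := by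
      have : (a : ℝ) ≤ n := by exact_mod_cast har.trans hrn
      linarith
    rw [prod_Ioc_succ_top hrn, ih, div_mul_div_comm, div_eq_div_iff
      (by push_cast; exact (mul_pos hpos hna).ne') hpos.ne']
    push_cast
    linear_combination (-(r.descFactorial a : ℝ)) * hrec

lemma rpow_mul_rpow_le_add_sub {y s : ℝ} (hy : 0 ≤ y) (hs₀ : 0 ≤ s) (hs₁ : s ≤ 1) :
    (y + 1) ^ (1 - s) * y ^ s ≤ y + 1 - s := by
  have := Real.geom_mean_le_arith_mean2_weighted (p₁ := y + 1) (sub_nonneg.2 hs₁) hs₀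
    (by linarith) hy (sub_add_cancel 1 s)
  linarith

lemma div_sub_le_rpow_mul_rpow {x y s : ℝ} (hx : 0 < x) (hy : 0 < y) (hs₀ : 0 ≤ s) (hs₁ : s ≤ 1) :
    x / (y + 1 - s) ≤ (x / (y + 1)) ^ (1 - s) * (x / y) ^ s := by
  rw [Real.div_rpow hx.le (by linarith), Real.div_rpow hx.le hy.le, div_mul_div_comm,
    ← Real.rpow_add hx, sub_add_cancel, Real.rpow_one]
  exact div_le_div_of_nonneg_left hx.le (by positivity) (rpow_mul_rpow_le_add_sub hy.le hs₀ hs₁)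

/-- Log-convexity of `a ↦ ∏ i / (i - a)`, interpolated between the integers `r - 1` and `r`. -/
lemma prod_Ioc_div_sub_le {r n : ℕ} {t : ℝ} (hr : 1 ≤ r) (hrn : r ≤ n) (htr : t ≤ r)
    (hrt : (r : ℝ) - 1 ≤ t) :
    ∏ i ∈ Ioc r n, (i : ℝ) / (i - t) ≤ n ^ t / r.factorial := by
  obtain ⟨s, rfl⟩ : ∃ s, t = r - 1 + s := ⟨t - (r - 1), by ring⟩
  have hs₀ : 0 ≤ s := by linarith
  have hs₁ : s ≤ 1 := by linarith
  have hr' : ((r - 1 : ℕ) : ℝ) = r - 1 := by rw [Nat.cast_sub hr, Nat.cast_one]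
  have hfactor : ∀ i ∈ Ioc r n, (i : ℝ) / (i - (r - 1 + s))
      ≤ ((i : ℝ) / (i - (r - 1 : ℕ))) ^ (1 - s) * ((i : ℝ) / (i - r)) ^ s := by
    intro i hi
    have hri : (r : ℝ) < i := by exact_mod_cast (mem_Ioc.1 hi).1
    have := div_sub_le_rpow_mul_rpow (x := i) (y := i - r) (by linarith) (by linarith) hs₀ hs₁
    rwa [hr', show (i : ℝ) - (r - 1 + s) = i - r + 1 - s by ring,
      show (i : ℝ) - (r - 1) = i - r + 1 by ring]
  have hfac : ((r.descFactorial (r - 1)) : ℝ) = r.factorial := by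
    have := Nat.factorial_mul_descFactorial (Nat.sub_le r 1)
    rw [Nat.sub_sub_self hr, Nat.factorial_one, one_mul] at this
    rw [this]
  have hprod₁ := prod_Ioc_div_sub_natCast (Nat.sub_le r 1) hrn
  have hprod₂ := prod_Ioc_div_sub_natCast le_rfl hrn
  rw [hfac] at hprod₁
  rw [Nat.descFactorial_self] at hprod₂
  have hn : (0 : ℝ) < n := by exact_mod_cast (by omega : 0 < n)
  have hsub : ∀ a : ℝ, a ≤ r → ∀ i ∈ Ioc r n, 0 ≤ (i : ℝ) / (i - a) := fun a ha i hi => by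
    have : (r : ℝ) < i := by exact_mod_cast (mem_Ioc.1 hi).1
    exact div_nonneg (Nat.cast_nonneg i) (by linarith)
  set x : ℝ := n ^ (r - 1) / r.factorial
  have hx : 0 ≤ x := by positivity
  calc ∏ i ∈ Ioc r n, (i : ℝ) / (i - (r - 1 + s))
      ≤ ∏ i ∈ Ioc r n, ((i : ℝ) / (i - (r - 1 : ℕ))) ^ (1 - s) * ((i : ℝ) / (i - r)) ^ s :=
        prod_le_prod (hsub _ (by linarith)) hfactor
    _ = (n.descFactorial (r - 1) / r.factorial : ℝ) ^ (1 - s)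
          * (n.descFactorial r / r.factorial : ℝ) ^ s := by
        rw [prod_mul_distrib, Real.finsetProd_rpow _ _ (hsub _ (by rw [hr']; linarith)),
          Real.finsetProd_rpow _ _ (hsub _ le_rfl), hprod₁, hprod₂]
    _ ≤ x ^ (1 - s) * (n * x) ^ s := by
        have h₁ : (n.descFactorial (r - 1) : ℝ) ≤ n ^ (r - 1) := by
          exact_mod_cast Nat.descFactorial_le_pow n (r - 1)
        have h₂ : (n.descFactorial r : ℝ) ≤ n * n ^ (r - 1) := by
          rw [← pow_succ', Nat.sub_add_cancel hr]
          exact_mod_cast Nat.descFactorial_le_pow n r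
        simp only [x, mul_div_assoc']
        gcongr
    _ = n ^ (r - 1 + s) / r.factorial := by
        rw [Real.mul_rpow hn.le hx, mul_left_comm, ← Real.rpow_add' hx (by linarith),
          sub_add_cancel, Real.rpow_one, Real.rpow_add hn, ← hr', Real.rpow_natCast]
        ring

lemma two_pow_le_two_mul_factorial {r : ℕ} (hr : 1 ≤ r) : 2 ^ r ≤ 2 * r.factorial := by
  have := Nat.factorial_mul_pow_le_factorial (m := 1) (n := r - 1)
  rw [Nat.factorial_one, one_mul, Nat.add_sub_cancel' hr] at this
  calc 2 ^ r = 2 * 2 ^ (r - 1) := by rw [← pow_succ', Nat.sub_add_cancel hr]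
    _ ≤ 2 * r.factorial := Nat.mul_le_mul_left 2 this

/-- Up to `r` vertices there are at most `2 ^ r - 2` cuts at all; each further vertex costs the
factor `n / (n - t)` of one contraction step. -/
noncomputable def cutBound (t : ℝ) (r n : ℕ) : ℝ :=
  (2 ^ r - 2) * ∏ i ∈ Ioc r n, (i : ℝ) / (i - t)

section CutBound

variable {t : ℝ} {r n : ℕ}

lemma cutBound_of_le (h : n ≤ r) : cutBound t r n = 2 ^ r - 2 := by
  simp [cutBound, Ioc_eq_empty_of_le h]

lemma cutBound_succ (h : r ≤ n) :
    cutBound t r (n + 1) = cutBound t r n * ((n + 1 : ℕ) / ((n + 1 : ℕ) - t)) := by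
  rw [cutBound, cutBound, prod_Ioc_succ_top h, mul_assoc]

lemma cutBound_nonneg (hr : 1 ≤ r) (htr : t ≤ r) : 0 ≤ cutBound t r n := by
  have h2r : (2 : ℝ) ≤ 2 ^ r := le_self_pow₀ one_le_two (by omega)
  refine mul_nonneg (by linarith) (prod_nonneg fun i hi => ?_)
  have : (r : ℝ) < i := by exact_mod_cast (mem_Ioc.1 hi).1
  exact div_nonneg (Nat.cast_nonneg i) (by linarith)

lemma cutBound_lt (hr : 1 ≤ r) (htr : t ≤ r) (hrt : (r : ℝ) - 1 ≤ t) (hn : 2 ≤ n) :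
    cutBound t r n < 2 * n ^ t := by
  have hn' : (2 : ℝ) ≤ n := by exact_mod_cast hn
  have hpow : (2 : ℝ) ^ r ≤ 2 * r.factorial := by exact_mod_cast two_pow_le_two_mul_factorial hr
  rcases le_or_gt n r with hnr | hrn
  · rw [cutBound_of_le hnr]
    calc (2 : ℝ) ^ r - 2 < 2 * 2 ^ ((r : ℝ) - 1) := by
          rw [Real.rpow_sub two_pos, Real.rpow_one, Real.rpow_natCast]; linarith
      _ ≤ 2 * 2 ^ t := by gcongr; exact one_le_two
      _ ≤ 2 * n ^ t := by
          have : (1 : ℝ) ≤ r := by exact_mod_cast hr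
          gcongr; linarith
  · have hfac : (0 : ℝ) < r.factorial := by positivity
    calc cutBound t r n ≤ (2 ^ r - 2) * (n ^ t / r.factorial) := by
          have h2r : (2 : ℝ) ≤ 2 ^ r := le_self_pow₀ one_le_two (by omega)
          exact mul_le_mul_of_nonneg_left (prod_Ioc_div_sub_le hr hrn.le htr hrt) (by linarith)
      _ < 2 * r.factorial * (n ^ t / r.factorial) := by
          gcongr
          linarith
      _ = 2 * n ^ t := by field_simp

end CutBound

def IsEulerian {V E : Type} [Fintype E] [DecidableEq V] (D : E → V × V) : Prop :=
  ∀ x : V, #{e | (D e).1 = x} = #{e | (D e).2 = x}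

def nonloopEdges {V E : Type} [Fintype E] [DecidableEq V] (D : E → V × V) : Finset E :=
  {e | (D e).1 ≠ (D e).2}

noncomputable def smallCuts {V E : Type} [Fintype V] [DecidableEq V] [Fintype E]
    (D : E → V × V) (b : ℝ) : Finset (Finset V) :=
  {A | A.Nonempty ∧ Aᶜ.Nonempty ∧ (dirCutValue D A : ℝ) ≤ b}

section Multigraph

variable {V W E : Type} [Fintype E] [DecidableEq V] [DecidableEq W] {D : E → V × V}

lemma IsEulerian.card_fst_mem (hD : IsEulerian D) (S : Finset V) :
    #{e | (D e).1 ∈ S} = #{e | (D e).2 ∈ S} := by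
  rw [← sum_card_fiberwise_eq_card_filter, ← sum_card_fiberwise_eq_card_filter]
  exact sum_congr rfl fun x _ => hD x

lemma IsEulerian.map [Fintype V] (hD : IsEulerian D) (f : V → W) :
    IsEulerian (fun e => (f (D e).1, f (D e).2)) := fun w => by
  simpa using hD.card_fst_mem {x | f x = w}

lemma IsEulerian.dirCutValue_compl [Fintype V] (hD : IsEulerian D) (A : Finset V) :
    dirCutValue D Aᶜ = dirCutValue D A := by
  have h := hD.card_fst_mem A
  simp only [dirCutValue, card_filter] at h ⊢
  rw [← add_left_inj (∑ e, if (D e).1 ∈ A then 1 else 0)]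
  nth_rw 2 [h]
  simp only [← sum_add_distrib]
  refine sum_congr rfl fun e _ => ?_
  by_cases h₁ : (D e).1 ∈ A <;> by_cases h₂ : (D e).2 ∈ A <;> simp [h₁, h₂]

variable (D) in
lemma card_filter_iff_add_dirCutValue_add_dirCutValue_compl [Fintype V] (A : Finset V) :
    #{e ∈ nonloopEdges D | (D e).1 ∈ A ↔ (D e).2 ∈ A} + dirCutValue D A + dirCutValue D Aᶜ
      = #(nonloopEdges D) := by
  simp only [nonloopEdges, dirCutValue, filter_filter, card_filter, ← sum_add_distrib]
  refine sum_congr rfl fun e _ => ?_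
  by_cases h₁ : (D e).1 ∈ A <;> by_cases h₂ : (D e).2 ∈ A <;> by_cases h : (D e).1 = (D e).2 <;>
    simp [h₁, h₂, h]

variable [Fintype V]

lemma card_mul_le_card_nonloopEdges [Nontrivial V] {c : ℕ}
    (hmin : ∀ A : Finset V, A.Nonempty → Aᶜ.Nonempty → c ≤ dirCutValue D A) :
    Fintype.card V * c ≤ #(nonloopEdges D) := by
  have hdeg : ∀ x : V, c ≤ #{e ∈ nonloopEdges D | (D e).1 = x} := fun x => by
    refine (hmin {x} (singleton_nonempty x) ?_).trans (card_le_card fun e he => ?_)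
    · obtain ⟨y, hy⟩ := exists_ne x
      exact ⟨y, by simpa using hy⟩
    · simp only [nonloopEdges, mem_filter, mem_univ, true_and, mem_singleton] at he ⊢
      exact ⟨he.1 ▸ Ne.symm he.2, he.1⟩
  calc Fintype.card V * c = ∑ _x : V, c := by rw [sum_const, card_univ, smul_eq_mul, mul_comm]
    _ ≤ ∑ x : V, #{e ∈ nonloopEdges D | (D e).1 = x} := sum_le_sum fun x _ => hdeg x
    _ = #(nonloopEdges D) := by
        rw [sum_card_fiberwise_eq_card_filter, filter_true_of_mem fun e _ => mem_univ _]

lemma card_smallCuts_add_two_le [Nonempty V] (b : ℝ) :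
    #(smallCuts D b) + 2 ≤ 2 ^ Fintype.card V := by
  have hdisj : Disjoint (smallCuts D b) {∅, univ} := by
    simp [disjoint_insert_right, smallCuts]
  have htwo : #({∅, univ} : Finset (Finset V)) = 2 :=
    card_pair (univ_nonempty.ne_empty.symm)
  rw [← Fintype.card_finset, ← htwo, ← card_union_of_disjoint hdisj]
  exact card_le_univ _

variable (D) in
lemma card_smallCuts_mul_le (hD : IsEulerian D) {b K : ℝ}
    (hK : ∀ e ∈ nonloopEdges D, (#{A ∈ smallCuts D b | (D e).1 ∈ A ↔ (D e).2 ∈ A} : ℝ) ≤ K) :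
    #(smallCuts D b) * (#(nonloopEdges D) - 2 * b) ≤ #(nonloopEdges D) * K := by
  have hA : ∀ A ∈ smallCuts D b,
      (#(nonloopEdges D) : ℝ) - 2 * b ≤ #{e ∈ nonloopEdges D | (D e).1 ∈ A ↔ (D e).2 ∈ A} := by
    intro A hA
    have hcut : (dirCutValue D A : ℝ) ≤ b := (mem_filter.1 hA).2.2.2
    have h := card_filter_iff_add_dirCutValue_add_dirCutValue_compl D A
    rw [hD.dirCutValue_compl] at h
    have h' : (#{e ∈ nonloopEdges D | (D e).1 ∈ A ↔ (D e).2 ∈ A} : ℝ) + 2 * dirCutValue D A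
        = #(nonloopEdges D) := by exact_mod_cast (by omega : _ + 2 * _ = _)
    linarith
  simpa [← nsmul_eq_mul] using
    card_nsmul_le_card_nsmul (fun A e => (D e).1 ∈ A ↔ (D e).2 ∈ A) hA hK

end Multigraph

section Contraction

variable {V E : Type} [DecidableEq V] {u v : V} (huv : u ≠ v)

/-- Contracting `uv` merges `v` into `u`; the contraction lives on `{y // y ≠ v}` and keeps every
edge, so edges parallel to `uv` become loops. -/
def mergeVertex (x : V) : {y // y ≠ v} :=
  if h : x = v then ⟨u, huv⟩ else ⟨x, h⟩

def contract (D : E → V × V) : E → {y // y ≠ v} × {y // y ≠ v} :=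
  fun e => (mergeVertex huv (D e).1, mergeVertex huv (D e).2)

variable [Fintype V]

def liftCut (A' : Finset {y // y ≠ v}) : Finset V :=
  {x | mergeVertex huv x ∈ A'}

omit [Fintype V] in
lemma mergeVertex_val (x : {y // y ≠ v}) : mergeVertex huv x = x :=
  dif_neg x.2

lemma liftCut_nonempty_iff {A' : Finset {y // y ≠ v}} :
    (liftCut huv A').Nonempty ↔ A'.Nonempty :=
  ⟨fun ⟨x, hx⟩ => ⟨_, (mem_filter.1 hx).2⟩,
    fun ⟨x, hx⟩ => ⟨x, by simpa [liftCut, mergeVertex_val] using hx⟩⟩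

lemma compl_liftCut (A' : Finset {y // y ≠ v}) : (liftCut huv A')ᶜ = liftCut huv A'ᶜ := by
  ext; simp [liftCut]

lemma liftCut_subtype {A : Finset V} (hA : u ∈ A ↔ v ∈ A) :
    liftCut huv (A.subtype (· ≠ v)) = A := by
  ext x
  by_cases hx : x = v
  · subst hx; simp [liftCut, mergeVertex, hA]
  · simp [liftCut, mergeVertex, hx]

variable [Fintype E] (D : E → V × V)

lemma dirCutValue_contract (A' : Finset {y // y ≠ v}) :
    dirCutValue (contract huv D) A' = dirCutValue D (liftCut huv A') := by
  unfold dirCutValue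
  congr 1
  ext e
  simp only [mem_filter, mem_univ, true_and, liftCut]
  rfl

lemma liftCut_mem_smallCuts_iff {b : ℝ} {A' : Finset {y // y ≠ v}} :
    liftCut huv A' ∈ smallCuts D b ↔ A' ∈ smallCuts (contract huv D) b := by
  simp only [smallCuts, mem_filter, mem_univ, true_and, compl_liftCut, liftCut_nonempty_iff,
    dirCutValue_contract]

lemma card_filter_iff_le_card_smallCuts_contract (b : ℝ) :
    #{A ∈ smallCuts D b | u ∈ A ↔ v ∈ A} ≤ #(smallCuts (contract huv D) b) := by
  refine (card_le_card fun A hA => ?_).trans (card_image_le (f := liftCut huv))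
  obtain ⟨hA, huvA⟩ := mem_filter.1 hA
  rw [← liftCut_subtype huv huvA, liftCut_mem_smallCuts_iff] at hA
  exact mem_image.2 ⟨_, hA, liftCut_subtype huv huvA⟩

lemma le_dirCutValue_contract {c : ℕ}
    (hmin : ∀ A : Finset V, A.Nonempty → Aᶜ.Nonempty → c ≤ dirCutValue D A)
    (A' : Finset {y // y ≠ v}) (h : A'.Nonempty) (hc : A'ᶜ.Nonempty) :
    c ≤ dirCutValue (contract huv D) A' := by
  rw [dirCutValue_contract]
  exact hmin _ ((liftCut_nonempty_iff huv).2 h) (by rwa [compl_liftCut, liftCut_nonempty_iff])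

end Contraction

lemma le_mul_div_sub_of_mul_sub_le {N m K n t c : ℝ} (h : N * (m - t * c) ≤ m * K) (hK : 0 ≤ K)
    (ht : 0 ≤ t) (htn : t < n) (hc : 0 < c) (hm : n * c ≤ m) :
    N ≤ K * (n / (n - t)) := by
  have hmt : 0 < m - t * c := by nlinarith
  rw [mul_div_assoc', le_div_iff₀ (sub_pos.2 htn)]
  refine le_of_mul_le_mul_right ?_ hmt
  nlinarith [mul_nonneg (mul_nonneg hK ht) (sub_nonneg.2 hm)]

theorem card_smallCuts_le_cutBound {α : ℝ} {r c : ℕ} (hα : 0 ≤ α) (hαr : 2 * α ≤ r) (hr : 1 ≤ r)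
    (hc : 1 ≤ c) (n : ℕ) :
    ∀ {V E : Type} [Fintype V] [DecidableEq V] [Nonempty V] [Fintype E] (D : E → V × V),
      Fintype.card V = n → IsEulerian D →
      (∀ A : Finset V, A.Nonempty → Aᶜ.Nonempty → c ≤ dirCutValue D A) →
      (#(smallCuts D (α * c)) : ℝ) ≤ cutBound (2 * α) r n := by
  induction n with
  | zero => intro V E _ _ _ _ D hn; exact absurd hn Fintype.card_ne_zero
  | succ k ih =>
    intro V E _ _ _ _ D hn hD hmin
    rcases le_or_gt (k + 1) r with hkr | hrk
    · have hcount : (#(smallCuts D (α * c)) : ℝ) + 2 ≤ 2 ^ (k + 1) := by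
        exact_mod_cast hn ▸ card_smallCuts_add_two_le (D := D) (α * c)
      have hpow : (2 : ℝ) ^ (k + 1) ≤ 2 ^ r := pow_le_pow_right₀ one_le_two hkr
      rw [cutBound_of_le hkr]
      linarith
    · have : Nontrivial V := Fintype.one_lt_card_iff_nontrivial.1 (by omega)
      have hedge : ∀ e ∈ nonloopEdges D,
          (#{A ∈ smallCuts D (α * c) | (D e).1 ∈ A ↔ (D e).2 ∈ A} : ℝ) ≤ cutBound (2 * α) r k := by
        intro e he
        have huv : (D e).1 ≠ (D e).2 := (mem_filter.1 he).2
        have : Nonempty {y // y ≠ (D e).2} := ⟨⟨_, huv⟩⟩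
        refine (Nat.cast_le.2 (card_filter_iff_le_card_smallCuts_contract huv D _)).trans ?_
        exact ih (contract huv D) (by simp [hn]) (hD.map _) (le_dirCutValue_contract huv D hmin)
      have hm : ((k + 1 : ℕ) : ℝ) * c ≤ #(nonloopEdges D) := by
        exact_mod_cast hn ▸ card_mul_le_card_nonloopEdges hmin
      have hαr' : 2 * α < (k + 1 : ℕ) := hαr.trans_lt (by exact_mod_cast hrk)
      rw [cutBound_succ (by omega)]
      refine le_mul_div_sub_of_mul_sub_le ?_ (cutBound_nonneg hr hαr) (by positivity) hαr'
        (by exact_mod_cast hc) hm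
      simpa [mul_assoc] using card_smallCuts_mul_le D hD hedge

theorem stmt18_general {V E : Type} [Fintype V] [DecidableEq V] [Fintype E]
    (D : E → V × V)
    (hn : 2 ≤ Fintype.card V)
    (heul : ∀ x : V, (Finset.univ.filter (fun e => (D e).1 = x)).card
        = (Finset.univ.filter (fun e => (D e).2 = x)).card)
    (c : ℕ) (hc : 1 ≤ c)
    (hmin : ∀ A : Finset V, A.Nonempty → Aᶜ.Nonempty → c ≤ dirCutValue D A)
    (α : ℝ) (hα : 1 ≤ α) :
    ((Finset.univ.filter (fun A : Finset V =>
        A.Nonempty ∧ Aᶜ.Nonempty ∧ (dirCutValue D A : ℝ) ≤ α * c)).card : ℝ)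
      < 2 * (Fintype.card V : ℝ) ^ (2 * α) := by
  have : Nonempty V := Fintype.card_pos_iff.1 (by omega)
  set r := ⌈2 * α⌉₊
  have htr : 2 * α ≤ r := Nat.le_ceil _
  have hrt : (r : ℝ) - 1 ≤ 2 * α := by linarith [Nat.ceil_lt_add_one (by linarith : 0 ≤ 2 * α)]
  have hr : 1 ≤ r := Nat.one_le_iff_ne_zero.2 fun h => by simp [h] at htr; linarith
  exact (card_smallCuts_le_cutBound (by linarith) htr hr hc _ D rfl heul hmin).trans_lt
    (cutBound_lt hr htr hrt hn)

/-- Let `D` be an Eulerian directed multigraph on `n ≥ 2` vertices (every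
vertex has in-degree equal to out-degree) whose minimum directed cut value `c` is at least `1`,
and let `α ≥ 1` be real.  Then the number of nonempty proper vertex subsets `A` whose directed
cut has value at most `α * c` is less than `2 n ^ (2α)`. -/
theorem stmt18 {V E : Type} [Fintype V] [DecidableEq V] [Fintype E]
    (D : E → V × V) (hnd : ∀ e, (D e).1 ≠ (D e).2)
    (hn : 2 ≤ Fintype.card V)
    (heul : ∀ x : V, (Finset.univ.filter (fun e => (D e).1 = x)).card
        = (Finset.univ.filter (fun e => (D e).2 = x)).card)
    (c : ℕ) (hc : 1 ≤ c)
    (hmin : ∀ A : Finset V, A.Nonempty → Aᶜ.Nonempty → c ≤ dirCutValue D A)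
    (hex : ∃ A : Finset V, A.Nonempty ∧ Aᶜ.Nonempty ∧ dirCutValue D A = c)
    (α : ℝ) (hα : 1 ≤ α) :
    ((Finset.univ.filter (fun A : Finset V =>
        A.Nonempty ∧ Aᶜ.Nonempty ∧ (dirCutValue D A : ℝ) ≤ α * c)).card : ℝ)
      < 2 * (Fintype.card V : ℝ) ^ (2 * α) :=
  stmt18_general D hn heul c hc hmin α hα
end
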